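/- arXiv:1512.05475 — 3 statements merged into one kernel-verified Lean document; each statement's English description precedes it below -/
import Mathlib

section
/- For every k ≥ 1, there exists a unary language that is (k+1)-lookahead deterministic but not k-block deterministic for any k; in particular the family of k-block deterministic languages is strictly included in the family of k-lookahead deterministic languages for every k ≥ 2. -/
namespace BD

/-- Language-level First: symbols beginning some word of `L`. -/
def LFirst {α : Type*} (L : Set (List α)) : Set α := {x | ∃ w, x :: w ∈ L}

/-- Language-level Last. -/
def LLast {α : Type*} (L : Set (List α)) : Set α := {x | ∃ w, w ++ [x] ∈ L}

/-- Language-level Follow. -/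
def LFollow {α : Type*} (L : Set (List α)) (x : α) : Set α :=
  {y | ∃ u v, u ++ x :: y :: v ∈ L}

/-- The list of symbol occurrences of a regular expression. -/
def rchars {α : Type*} : RegularExpression α → List α
  | .zero => []
  | .epsilon => []
  | .char a => [a]
  | .plus p q => rchars p ++ rchars q
  | .comp p q => rchars p ++ rchars q
  | .star p => rchars p

/-- The Glushkov automaton of a (marked) language `L` over positions `π`,
with labelling map `f` dropping the marks. States are `Option π`, `none` being initial. -/
def glushkov {π β : Type*} (L : Set (List π)) (f : π → β) : NFA β (Option π) where
  step q b :=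
    match q with
    | none => {s | ∃ y, y ∈ LFirst L ∧ f y = b ∧ s = some y}
    | some x => {s | ∃ y, y ∈ LFollow L x ∧ f y = b ∧ s = some y}
  start := {none}
  accept := {s | ∃ y, y ∈ LLast L ∧ s = some y} ∪ {s | s = none ∧ [] ∈ L}

/-- Determinism of an automaton. -/
def Det {β σ : Type*} (A : NFA β σ) : Prop :=
  (∃ i, A.start = {i}) ∧
  ∀ p b q₁ q₂, q₁ ∈ A.step p b → q₂ ∈ A.step p b → q₁ = q₂

/-- `k`-lookahead determinism of an automaton. -/
def kLA {β σ : Type*} (A : NFA β σ) (k : ℕ) : Prop :=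
  (∃ i, A.start = {i}) ∧
  ∀ p b q₁ q₂, q₁ ∈ A.step p b → q₂ ∈ A.step p b → q₁ ≠ q₂ →
    ∀ w : List β, w.length = k - 1 → A.evalFrom {q₁} w = ∅ ∨ A.evalFrom {q₂} w = ∅

/-- `k`-block determinism of a block automaton (labels are nonempty words of length ≤ k,
single initial state, no outgoing label a prefix of another outgoing label). -/
def kBD {γ σ : Type*} (A : NFA (List γ) σ) (k : ℕ) : Prop :=
  (∃ i, A.start = {i}) ∧
  (∀ q b, (A.step q b).Nonempty → 1 ≤ b.length ∧ b.length ≤ k) ∧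
  (∀ p b₁ b₂ q₁ q₂, q₁ ∈ A.step p b₁ → q₂ ∈ A.step p b₂ →
      (b₁, q₁) ≠ (b₂, q₂) → ¬ b₁ <+: b₂)

/-- A language over `γ` is `k`-block deterministic if it is specified by a block
regular expression (given by its marked version `E` over positions `π` together with
the dropping map `f` to blocks) whose Glushkov automaton is `k`-block deterministic. -/
def IsKBlockDet {γ : Type} (L : Set (List γ)) (k : ℕ) : Prop :=
  ∃ (π : Type) (E : RegularExpression π) (f : π → List γ),
    (rchars E).Nodup ∧
    kBD (glushkov E.matches' f) k ∧
    L = {w | ∃ ws ∈ E.matches', (ws.map f).flatten = w}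

/-- A language is `k`-lookahead deterministic if specified by a regular expression
whose Glushkov automaton is `k`-lookahead deterministic. -/
def IsKLookaheadDet {γ : Type} (L : Set (List γ)) (k : ℕ) : Prop :=
  ∃ (π : Type) (E : RegularExpression π) (f : π → γ),
    (rchars E).Nodup ∧
    kLA (glushkov E.matches' f) k ∧
    L = {w | ∃ ws ∈ E.matches', ws.map f = w}

/-- A language is one-unambiguous if specified by a regular expression with
deterministic Glushkov automaton. -/
def IsOneUnambiguous {γ : Type} (L : Set (List γ)) : Prop :=
  ∃ (π : Type) (E : RegularExpression π) (f : π → γ),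
    (rchars E).Nodup ∧
    Det (glushkov E.matches' f) ∧
    L = {w | ∃ ws ∈ E.matches', ws.map f = w}

/-- Reachability in an automaton. -/
def Reach {β σ : Type*} (A : NFA β σ) (p q : σ) : Prop := ∃ w, q ∈ A.evalFrom {p} w

/-- `O` is an orbit (strongly connected component) of `A`. -/
def IsOrbit {β σ : Type*} (A : NFA β σ) (O : Set σ) : Prop :=
  ∃ q, O = {p | Reach A p q ∧ Reach A q p}

/-- A non-trivial orbit: one containing a cycle. -/
def NonTrivial {β σ : Type*} (A : NFA β σ) (O : Set σ) : Prop :=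
  ∃ p ∈ O, ∃ w : List β, w ≠ [] ∧ p ∈ A.evalFrom {p} w

/-- In-gate of an orbit. -/
def InGate {β σ : Type*} (A : NFA β σ) (O : Set σ) (q : σ) : Prop :=
  q ∈ O ∧ (q ∈ A.start ∨ ∃ p ∉ O, ∃ b, q ∈ A.step p b)

/-- Out-gate of an orbit. -/
def OutGate {β σ : Type*} (A : NFA β σ) (O : Set σ) (q : σ) : Prop :=
  q ∈ O ∧ (q ∈ A.accept ∨ ∃ p ∉ O, ∃ b, p ∈ A.step q b)

end BD

namespace BD

section Helpers

variable {α β σ : Type*}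

lemma evalFrom_cons (A : NFA β σ) (S : Set σ) (b : β) (w : List β) :
    A.evalFrom S (b :: w) = A.evalFrom (A.stepSet S b) w := rfl

lemma evalFrom_empty' (A : NFA β σ) (w : List β) : A.evalFrom ∅ w = ∅ := by
  induction w with
  | nil => rfl
  | cons b w ih => rw [evalFrom_cons, NFA.stepSet_empty]; exact ih

lemma stepSet_mono (A : NFA β σ) {S T : Set σ} (h : S ⊆ T) (b : β) :
    A.stepSet S b ⊆ A.stepSet T b := by
  intro q hq
  rw [NFA.mem_stepSet] at *
  obtain ⟨t, ht, h2⟩ := hq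
  exact ⟨t, h ht, h2⟩

lemma evalFrom_mono (A : NFA β σ) {S T : Set σ} (h : S ⊆ T) (w : List β) :
    A.evalFrom S w ⊆ A.evalFrom T w := by
  induction w generalizing S T with
  | nil => exact h
  | cons b w ih => exact ih (stepSet_mono A h b)

lemma evalFrom_eq_empty (A : NFA β σ) {S : Set σ} (h : S ⊆ ∅) (w : List β) :
    A.evalFrom S w = ∅ :=
  Set.subset_empty_iff.1 ((evalFrom_mono A h w).trans (evalFrom_empty' A w).subset)

lemma chain'_of_adj {R : α → α → Prop} :
    ∀ l : List α, (∀ u v a b, l = u ++ a :: b :: v → R a b) → l.Chain' R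
  | [], _ => List.isChain_nil
  | [_], _ => List.isChain_singleton _
  | a :: b :: t, h =>
    List.isChain_cons_cons.2 ⟨h [] t a b rfl,
      chain'_of_adj (b :: t) fun u v x y huv => h (a :: u) v x y (by simp [huv])⟩

lemma chain'_extract {R : α → α → Prop} {l u v : List α} {a b : α}
    (hc : l.Chain' R) (h : l = u ++ a :: b :: v) : R a b := by
  subst h
  exact (List.isChain_append_cons_cons.1 hc).2.1

lemma exists_mismatch : ∀ l₁ l₂ : List α, ¬ l₁ <+: l₂ → ¬ l₂ <+: l₁ →
    ∃ j, j < l₁.length ∧ j < l₂.length ∧ l₁[j]? ≠ l₂[j]? ∧ ∀ m < j, l₁[m]? = l₂[m]?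
  | [], l₂, h1, _ => absurd (List.nil_prefix) h1
  | _ :: _, [], _, h2 => absurd (List.nil_prefix) h2
  | a :: t₁, c :: t₂, h1, h2 => by
    by_cases hac : a = c
    · subst hac
      have h1' : ¬ t₁ <+: t₂ := fun h => h1 (List.cons_prefix_cons.2 ⟨rfl, h⟩)
      have h2' : ¬ t₂ <+: t₁ := fun h => h2 (List.cons_prefix_cons.2 ⟨rfl, h⟩)
      obtain ⟨j, hj1, hj2, hne, hall⟩ := exists_mismatch t₁ t₂ h1' h2'
      refine ⟨j + 1, by simpa using hj1, by simpa using hj2, by simpa using hne, fun m hm => ?_⟩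
      cases m with
      | zero => simp
      | succ m => simpa using hall m (by omega)
    · exact ⟨0, by simp, by simp, by simpa using hac, by omega⟩

lemma unit_list_eq_of_length {u v : List Unit} (h : u.length = v.length) : u = v :=
  List.ext_getElem h fun _ _ _ => Subsingleton.elim _ _

lemma unit_prefix_total (u v : List Unit) : u <+: v ∨ v <+: u := by
  rcases le_total u.length v.length with h | h
  · left
    have : u = v.take u.length := unit_list_eq_of_length (by simp [h])
    exact this ▸ List.take_prefix _ _
  · right
    have : v = u.take v.length := unit_list_eq_of_length (by simp [h])
    exact this ▸ List.take_prefix _ _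

end Helpers

section NumSemigroup

lemma exists_rep {a b : ℕ} (ha : 0 < a) (hb : 0 < b) (hco : Nat.Coprime b a) :
    ∀ m, a * b ≤ m → ∃ x y, m = x * a + y * b := by
  intro m hm
  haveI : NeZero a := ⟨by omega⟩
  set w : (ZMod a)ˣ := ZMod.unitOfCoprime b hco with hw
  set y : ZMod a := ((w⁻¹ : (ZMod a)ˣ) : ZMod a) * (m : ZMod a) with hy
  have hyb : (y.val * b : ZMod a) = (m : ZMod a) := by
    push_cast
    rw [ZMod.natCast_val, ZMod.cast_id, hy]
    have hbw : ((w : (ZMod a)ˣ) : ZMod a) = (b : ZMod a) := ZMod.coe_unitOfCoprime b hco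
    calc ((w⁻¹ : (ZMod a)ˣ) : ZMod a) * (m : ZMod a) * b
        = (((w⁻¹ : (ZMod a)ˣ) : ZMod a) * ((w : (ZMod a)ˣ) : ZMod a)) * (m : ZMod a) := by
          rw [hbw]; ring
      _ = (m : ZMod a) := by rw [← Units.val_mul, inv_mul_cancel]; simp
  have hylt : y.val < a := ZMod.val_lt y
  have hle : y.val * b ≤ m := by
    calc y.val * b ≤ (a - 1) * b := Nat.mul_le_mul_right _ (by omega)
      _ ≤ m := by
          have : (a - 1) * b < a * b := by
            apply Nat.mul_lt_mul_of_lt_of_le (by omega) (le_refl b) hb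
          omega
  have hdvd : a ∣ m - y.val * b := by
    rw [← ZMod.natCast_eq_zero_iff]
    push_cast [Nat.cast_sub hle]
    rw [sub_eq_zero]
    exact_mod_cast hyb.symm
  obtain ⟨x, hx⟩ := hdvd
  refine ⟨x, y.val, ?_⟩
  rw [Nat.mul_comm a x] at hx
  omega

variable (S : Set ℕ)

lemma nsmul_mem (h0 : 0 ∈ S) (hadd : ∀ a ∈ S, ∀ b ∈ S, a + b ∈ S) :
    ∀ k a, a ∈ S → k * a ∈ S := by
  intro k
  induction k with
  | zero => intro a _; simpa using h0
  | succ k ih => intro a ha; have := hadd _ (ih a ha) _ ha; rwa [← Nat.succ_mul] at this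

lemma semigroup_descent (h0 : 0 ∈ S) (hadd : ∀ a ∈ S, ∀ b ∈ S, a + b ∈ S) :
    ∀ d, 0 < d → ∀ N, (∀ n, N ≤ n → d ∣ n → n ∈ S) →
      ∃ d' N', 0 < d' ∧ (∀ n, N' ≤ n → d' ∣ n → n ∈ S) ∧ (∀ s ∈ S, d' ∣ s) := by
  intro d
  induction d using Nat.strong_induction_on with
  | _ d ih =>
    intro hd N hN
    by_cases hall : ∀ s ∈ S, d ∣ s
    · exact ⟨d, N, hd, hN, hall⟩
    · push_neg at hall
      obtain ⟨s, hs, hds⟩ := hall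
      have hs0 : s ≠ 0 := by rintro rfl; exact hds (dvd_zero d)
      set g := Nat.gcd d s with hg
      have hg0 : 0 < g := Nat.gcd_pos_of_pos_left _ hd
      have hgd : g ∣ d := Nat.gcd_dvd_left _ _
      have hgs : g ∣ s := Nat.gcd_dvd_right _ _
      have hgltd : g < d := by
        rcases Nat.lt_or_ge g d with h | h
        · exact h
        · exfalso; exact hds (by
            have : g = d := le_antisymm (Nat.le_of_dvd hd hgd) h
            exact this ▸ hgs)
      set s' := s / g with hs'
      set d'' := d / g with hd''
      have hs'1 : 0 < s' := Nat.div_pos (Nat.le_of_dvd (by omega) hgs) hg0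
      have hd''1 : 0 < d'' := Nat.div_pos (Nat.le_of_dvd hd hgd) hg0
      have hco : Nat.Coprime d'' s' := Nat.coprime_div_gcd_div_gcd hg0
      set K := s' * N + 1 with hK
      set A := d * K with hA
      have hAS : A ∈ S := by
        refine hN A ?_ ⟨K, rfl⟩
        calc N ≤ s' * N := Nat.le_mul_of_pos_left _ hs'1
          _ ≤ K := by omega
          _ ≤ d * K := Nat.le_mul_of_pos_left _ hd
      have hA0 : 0 < A := by positivity
      have hgcdA : Nat.gcd A s = g := by
        have h1 : A = g * (d'' * K) := by
          rw [hA, hd'', ← Nat.mul_assoc, Nat.mul_div_cancel' hgd]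
        have h2 : s = g * s' := (Nat.mul_div_cancel' hgs).symm
        rw [h1]
        conv_lhs => rw [h2]
        rw [Nat.gcd_mul_left]
        have hKs' : Nat.Coprime K s' := by
          have : Nat.gcd s' K = 1 := by
            rw [hK, Nat.mul_comm s' N]
            have := Nat.gcd_add_mul_right_right s' 1 N
            simpa [Nat.add_comm] using this
          exact Nat.coprime_comm.mp this
        have : Nat.Coprime (d'' * K) s' := Nat.Coprime.mul hco hKs'
        rw [this, Nat.mul_one]
      have hinv : ∀ n, A * s ≤ n → g ∣ n → n ∈ S := by
        intro n hn ⟨m', hm'⟩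
        have ha' : 0 < A / g := Nat.div_pos (Nat.le_of_dvd hA0 (hgcdA ▸ Nat.gcd_dvd_left A s)) hg0
        have hcop : Nat.Coprime s' (A / g) := by
          have : Nat.gcd (A / g) (s / g) = 1 := by
            rw [← hgcdA] at hg0 ⊢
            exact Nat.coprime_div_gcd_div_gcd hg0
          exact Nat.coprime_comm.mp this
        have hm'big : (A / g) * s' ≤ m' := by
          have hAg : g * (A / g) = A := Nat.mul_div_cancel' (hgcdA ▸ Nat.gcd_dvd_left A s)
          have hsg : g * s' = s := Nat.mul_div_cancel' hgs
          have : g * ((A / g) * s') ≤ g * m' := by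
            calc g * ((A / g) * s') = A * s' := by rw [← Nat.mul_assoc, hAg]
              _ ≤ A * (g * s') := by
                  apply Nat.mul_le_mul_left
                  exact Nat.le_mul_of_pos_left _ hg0
              _ = A * s := by rw [hsg]
              _ ≤ n := hn
              _ = g * m' := hm'
          exact Nat.le_of_mul_le_mul_left this hg0
        obtain ⟨x, y, hxy⟩ := exists_rep ha' hs'1 hcop m' hm'big
        have : n = x * A + y * s := by
          have hAg : g * (A / g) = A := Nat.mul_div_cancel' (hgcdA ▸ Nat.gcd_dvd_left A s)
          have hsg : g * s' = s := Nat.mul_div_cancel' hgs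
          calc n = g * m' := hm'
            _ = g * (x * (A / g) + y * s') := by rw [hxy]
            _ = x * (g * (A / g)) + y * (g * s') := by ring
            _ = x * A + y * s := by rw [hAg, hsg]
        rw [this]
        exact hadd _ (Nat.mul_comm A x ▸ nsmul_mem S h0 hadd x A hAS)
          _ (Nat.mul_comm s y ▸ nsmul_mem S h0 hadd y s hs)
      exact ih g hgltd hg0 (A * s) hinv

lemma num_semigroup (h0 : 0 ∈ S) (hadd : ∀ a ∈ S, ∀ b ∈ S, a + b ∈ S)
    (hpos : ∃ a ∈ S, 0 < a) :
    ∃ d N, 0 < d ∧ ∀ n, N ≤ n → (n ∈ S ↔ d ∣ n) := by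
  obtain ⟨a, haS, ha⟩ := hpos
  have seed : ∀ n, 0 ≤ n → a ∣ n → n ∈ S := by
    rintro n - ⟨m, rfl⟩
    exact Nat.mul_comm m a ▸ nsmul_mem S h0 hadd m a haS
  obtain ⟨d, N, hd, hin, hdvd⟩ := semigroup_descent S h0 hadd a ha 0 seed
  exact ⟨d, N, hd, fun n hn => ⟨fun h => hdvd n h, fun h => hin n hn h⟩⟩

end NumSemigroup

section RegexHelpers

variable {α : Type*}

open RegularExpression in
lemma mem_rchars_of_matches : ∀ (E : RegularExpression α), ∀ w ∈ E.matches', ∀ x ∈ w, x ∈ rchars E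
  | RegularExpression.zero, w, hw, x, hx => by
      simp only [RegularExpression.matches'] at hw; exact hw.elim
  | RegularExpression.epsilon, w, hw, x, hx => by
      simp only [RegularExpression.matches'] at hw
      rw [Language.mem_one] at hw; subst hw; simp at hx
  | RegularExpression.char a, w, hw, x, hx => by
      have hwa : w = [a] := hw
      subst hwa
      simpa [rchars] using hx
  | RegularExpression.plus p q, w, hw, x, hx => by
      simp only [RegularExpression.matches'] at hw
      rw [Language.mem_add] at hw
      rcases hw with h | h
      · exact List.mem_append_left _ (mem_rchars_of_matches p w h x hx)
      · exact List.mem_append_right _ (mem_rchars_of_matches q w h x hx)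
  | RegularExpression.comp p q, w, hw, x, hx => by
      simp only [RegularExpression.matches'] at hw
      rw [Language.mem_mul] at hw
      obtain ⟨u, hu, v, hv, rfl⟩ := hw
      rcases List.mem_append.1 hx with h | h
      · exact List.mem_append_left _ (mem_rchars_of_matches p u hu x h)
      · exact List.mem_append_right _ (mem_rchars_of_matches q v hv x h)
  | RegularExpression.star p, w, hw, x, hx => by
      simp only [RegularExpression.matches'] at hw
      rw [Language.mem_kstar] at hw
      obtain ⟨S, rfl, hS⟩ := hw
      obtain ⟨u, hu, hxu⟩ := List.mem_flatten.1 hx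
      exact mem_rchars_of_matches p u (hS u hu) x hxu

/-- A concatenation of single characters. -/
def chainExpr : List α → RegularExpression α
  | [] => RegularExpression.epsilon
  | a :: l => RegularExpression.comp (RegularExpression.char a) (chainExpr l)

lemma rchars_chainExpr (l : List α) : rchars (chainExpr l) = l := by
  induction l with
  | nil => rfl
  | cons a l ih => simp [chainExpr, rchars, ih]

lemma matches'_chainExpr (l : List α) : (chainExpr l).matches' = {l} := by
  induction l with
  | nil =>
    ext w; simp only [chainExpr, RegularExpression.matches']
    rw [Language.mem_one]; exact Iff.rfl
  | cons a l ih =>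
    ext w; simp only [chainExpr, RegularExpression.matches']
    rw [Language.mem_mul]
    constructor
    · rintro ⟨u, hu, v, hv, rfl⟩
      replace hu : u = [a] := hu
      rw [ih] at hv; replace hv : v = l := hv
      subst hu; subst hv; rfl
    · rintro rfl
      exact ⟨[a], rfl, l, by rw [ih]; rfl, rfl⟩

lemma mem_first_or_follow {M : Set (List α)} {w : List α} (hw : w ∈ M) :
    ∀ x ∈ w, x ∈ LFirst M ∨ ∃ z, x ∈ LFollow M z := by
  intro x hx
  obtain ⟨u, v, rfl⟩ := List.append_of_mem hx
  rcases List.eq_nil_or_concat u with rfl | ⟨u₀, z, rfl⟩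
  · exact Or.inl ⟨v, hw⟩
  · refine Or.inr ⟨z, u₀, v, ?_⟩
    simpa using hw

lemma take_eq_of_det {M : Set (List α)}
    (hF : ∀ y₁ ∈ LFirst M, ∀ y₂ ∈ LFirst M, y₁ = y₂)
    (hFol : ∀ x : α, ∀ y₁ ∈ LFollow M x, ∀ y₂ ∈ LFollow M x, y₁ = y₂) :
    ∀ n, ∀ w₁ ∈ M, ∀ w₂ ∈ M, n ≤ w₁.length → n ≤ w₂.length → w₁.take n = w₂.take n := by
  have decomp : ∀ (w : List α) (i : ℕ) (h : i + 1 < w.length),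
      w = w.take i ++ w[i] :: w[i+1] :: w.drop (i + 2) := by
    intro w i h
    conv_lhs => rw [← List.take_append_drop i w]
    rw [List.drop_eq_getElem_cons (by omega), List.drop_eq_getElem_cons (by omega)]
  have getelem : ∀ n, (∀ w₁ ∈ M, ∀ w₂ ∈ M, n ≤ w₁.length → n ≤ w₂.length →
      w₁.take n = w₂.take n) →
      ∀ w₁ ∈ M, ∀ w₂ ∈ M, ∀ (h₁ : n < w₁.length) (h₂ : n < w₂.length), w₁[n] = w₂[n] := by
    intro n ihn w₁ h₁M w₂ h₂M h₁ h₂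
    cases n with
    | zero =>
      obtain ⟨a₁, t₁, e₁⟩ := List.exists_cons_of_ne_nil (List.ne_nil_of_length_pos h₁)
      obtain ⟨a₂, t₂, e₂⟩ := List.exists_cons_of_ne_nil (List.ne_nil_of_length_pos h₂)
      have := hF a₁ ⟨t₁, e₁ ▸ h₁M⟩ a₂ ⟨t₂, e₂ ▸ h₂M⟩
      subst e₁; subst e₂; simpa using this
    | succ m =>
      have hm₁ : m < w₁.length := by omega
      have hm₂ : m < w₂.length := by omega
      have hmm : w₁[m] = w₂[m] := by
        have ht := ihn w₁ h₁M w₂ h₂M (by omega) (by omega)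
        have e := congrArg (fun l : List α => l[m]?) ht
        simp only [List.getElem?_take_of_lt (by omega : m < m + 1)] at e
        rw [List.getElem?_eq_getElem hm₁, List.getElem?_eq_getElem hm₂] at e
        exact Option.some_injective _ e
      have f₁ : w₁[m+1] ∈ LFollow M (w₁[m]) :=
        ⟨w₁.take m, w₁.drop (m+2), by rw [← decomp w₁ m h₁]; exact h₁M⟩
      have f₂ : w₂[m+1] ∈ LFollow M (w₂[m]) :=
        ⟨w₂.take m, w₂.drop (m+2), by rw [← decomp w₂ m h₂]; exact h₂M⟩
      rw [hmm] at f₁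
      exact hFol _ _ f₁ _ f₂
  intro n
  induction n with
  | zero => intro w₁ _ w₂ _ _ _; simp
  | succ n ih =>
    intro w₁ h₁M w₂ h₂M h₁ h₂
    have ht := ih w₁ h₁M w₂ h₂M (by omega) (by omega)
    have hg := getelem n ih w₁ h₁M w₂ h₂M (by omega) (by omega)
    rw [List.take_succ, List.take_succ, ht,
      List.getElem?_eq_getElem (by omega : n < w₁.length),
      List.getElem?_eq_getElem (by omega : n < w₂.length), hg]

lemma chain_of_det {M : Set (List α)}
    (hF : ∀ y₁ ∈ LFirst M, ∀ y₂ ∈ LFirst M, y₁ = y₂)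
    (hFol : ∀ x : α, ∀ y₁ ∈ LFollow M x, ∀ y₂ ∈ LFollow M x, y₁ = y₂) :
    ∀ w₁ ∈ M, ∀ w₂ ∈ M, w₁ <+: w₂ ∨ w₂ <+: w₁ := by
  intro w₁ h₁ w₂ h₂
  rcases le_total w₁.length w₂.length with h | h
  · left
    have := take_eq_of_det hF hFol w₁.length w₁ h₁ w₂ h₂ le_rfl h
    rw [List.take_length] at this
    exact this ▸ List.take_prefix _ _
  · right
    have := take_eq_of_det hF hFol w₂.length w₂ h₂ w₁ h₁ le_rfl h
    rw [List.take_length] at this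
    exact this ▸ List.take_prefix _ _

end RegexHelpers

section EventuallyAP

variable {α : Type*}

/-- `W` is eventually exactly an arithmetic progression. -/
def APon (W : Set ℕ) : Prop := ∃ t d, 1 ≤ d ∧ ∀ n, t ≤ n → (n ∈ W ↔ d ∣ (n - t))

lemma APon_congr {W W' : Set ℕ} (h : ∀ n, 1 ≤ n → (n ∈ W ↔ n ∈ W')) (hW : APon W) :
    APon W' := by
  obtain ⟨t, d, hd, hap⟩ := hW
  refine ⟨t + d, d, hd, fun n hn => ?_⟩
  rw [← h n (by omega), hap n (by omega)]
  constructor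
  · rintro ⟨m, hm⟩
    have hm1 : 1 ≤ m := by
      rcases Nat.eq_zero_or_pos m with rfl | h1
      · omega
      · exact h1
    refine ⟨m - 1, ?_⟩
    have e : d * (m - 1) + d = d * m := by
      rw [← Nat.mul_succ]; congr 1; omega
    omega
  · rintro ⟨m, hm⟩
    refine ⟨m + 1, ?_⟩
    have e : d * (m + 1) = d * m + d := Nat.mul_succ d m
    omega

lemma plus_case_help (Mr Ms Mtot : Set (List α)) (c : α → ℕ)
    (hmem' : ∀ w, w ∈ Mtot ↔ w ∈ Mr ∨ w ∈ Ms) (hs : ∀ v ∈ Ms, v = [])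
    (ihr : APon {n | ∃ w ∈ Mr, (w.map c).sum = n}) :
    APon {n | ∃ w ∈ Mtot, (w.map c).sum = n} := by
  refine APon_congr (fun n hn => ?_) ihr
  constructor
  · rintro ⟨w, hw, rfl⟩
    exact ⟨w, (hmem' w).2 (Or.inl hw), rfl⟩
  · rintro ⟨w, hw, rfl⟩
    rcases (hmem' w).1 hw with h | h
    · exact ⟨w, h, rfl⟩
    · exfalso; rw [hs w h] at hn; simp at hn

lemma eventually_AP :
    ∀ (E : RegularExpression α) (c : α → ℕ),
      (rchars E).Nodup →
      (∀ w₁ ∈ E.matches', ∀ w₂ ∈ E.matches', w₁ <+: w₂ ∨ w₂ <+: w₁) →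
      (∀ w ∈ E.matches', ∀ x ∈ w, 1 ≤ c x) →
      Set.Infinite (E.matches' : Set (List α)) →
      APon {n | ∃ w ∈ E.matches', (w.map c).sum = n}
  | RegularExpression.zero, c, _, _, _, hinf => by
      exfalso
      apply hinf
      have : (RegularExpression.zero.matches' : Set (List α)) = (∅ : Set (List α)) := rfl
      rw [this]; exact Set.finite_empty
  | RegularExpression.epsilon, c, _, _, _, hinf => by
      exfalso
      apply hinf
      have : (RegularExpression.epsilon.matches' : Set (List α)) = {[]} := rfl
      rw [this]; exact Set.finite_singleton _
  | RegularExpression.char a, c, _, _, _, hinf => by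
      exfalso
      apply hinf
      have : ((RegularExpression.char a).matches' : Set (List α)) = {[a]} := rfl
      rw [this]; exact Set.finite_singleton _
  | RegularExpression.plus p q, c, hnd, hch, hpos, hinf => by
      have hmem : ∀ w, w ∈ (RegularExpression.plus p q).matches' ↔
          w ∈ p.matches' ∨ w ∈ q.matches' := by
        intro w; simp only [RegularExpression.matches']; exact Language.mem_add _ _ _
      have hnd' : (rchars p).Nodup ∧ (rchars q).Nodup ∧ (rchars p).Disjoint (rchars q) := by
        have : rchars (RegularExpression.plus p q) = rchars p ++ rchars q := rfl
        rw [this, List.nodup_append] at hnd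
        exact ⟨hnd.1, hnd.2.1, fun a ha hb => hnd.2.2 a ha a hb rfl⟩
      have headclash : ∀ u ∈ p.matches', ∀ v ∈ q.matches', u ≠ [] → v ≠ [] → False := by
        intro u hu v hv hu0 hv0
        obtain ⟨x, u', rfl⟩ := List.exists_cons_of_ne_nil hu0
        obtain ⟨y, v', rfl⟩ := List.exists_cons_of_ne_nil hv0
        have hcomp := hch _ ((hmem _).2 (Or.inl hu)) _ ((hmem _).2 (Or.inr hv))
        have hxy : x = y := by
          rcases hcomp with ⟨t, ht⟩ | ⟨t, ht⟩
          · simpa using congrArg List.head? ht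
          · simpa using (congrArg List.head? ht).symm
        subst hxy
        exact hnd'.2.2 (mem_rchars_of_matches p _ hu x (by simp))
          (mem_rchars_of_matches q _ hv x (by simp))
      have one : (∀ v ∈ q.matches', v = []) ∨ (∀ v ∈ p.matches', v = []) := by
        by_contra hc
        push_neg at hc
        obtain ⟨⟨v, hv, hv0⟩, ⟨u, hu, hu0⟩⟩ := hc
        exact headclash u hu v hv hu0 hv0
      rcases one with h | h
      · have hinfr : Set.Infinite (p.matches' : Set (List α)) := by
          intro hfin
          apply hinf
          apply Set.Finite.subset (hfin.union (Set.finite_singleton []))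
          intro w hw
          rcases (hmem w).1 hw with h' | h'
          · exact Or.inl h'
          · exact Or.inr (h w h')
        have ihr := eventually_AP p c hnd'.1
          (fun w₁ h₁ w₂ h₂ => hch w₁ ((hmem w₁).2 (Or.inl h₁)) w₂ ((hmem w₂).2 (Or.inl h₂)))
          (fun w hw => hpos w ((hmem w).2 (Or.inl hw))) hinfr
        exact plus_case_help _ _ _ c hmem h ihr
      · have hmem2 : ∀ w, w ∈ (RegularExpression.plus p q).matches' ↔
            w ∈ q.matches' ∨ w ∈ p.matches' := fun w => (hmem w).trans or_comm
        have hinfr : Set.Infinite (q.matches' : Set (List α)) := by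
          intro hfin
          apply hinf
          apply Set.Finite.subset (hfin.union (Set.finite_singleton []))
          intro w hw
          rcases (hmem2 w).1 hw with h' | h'
          · exact Or.inl h'
          · exact Or.inr (h w h')
        have ihr := eventually_AP q c hnd'.2.1
          (fun w₁ h₁ w₂ h₂ => hch w₁ ((hmem2 w₁).2 (Or.inl h₁)) w₂ ((hmem2 w₂).2 (Or.inl h₂)))
          (fun w hw => hpos w ((hmem2 w).2 (Or.inl hw))) hinfr
        exact plus_case_help _ _ _ c hmem2 h ihr
  | RegularExpression.comp p q, c, hnd, hch, hpos, hinf => by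
      have hmem : ∀ w, w ∈ (RegularExpression.comp p q).matches' ↔
          ∃ u ∈ p.matches', ∃ v ∈ q.matches', u ++ v = w := by
        intro w; simp only [RegularExpression.matches']; exact Language.mem_mul
      have hnd' : (rchars p).Nodup ∧ (rchars q).Nodup ∧ (rchars p).Disjoint (rchars q) := by
        have : rchars (RegularExpression.comp p q) = rchars p ++ rchars q := rfl
        rw [this, List.nodup_append] at hnd
        exact ⟨hnd.1, hnd.2.1, fun a ha hb => hnd.2.2 a ha a hb rfl⟩
      obtain ⟨w₀, hw₀⟩ := hinf.nonempty
      obtain ⟨u₀, hu₀, v₀, hv₀, rfl⟩ := (hmem w₀).1 hw₀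
      by_cases hq : ∀ v ∈ q.matches', v = []
      · have hv0 : v₀ = [] := hq v₀ hv₀
        subst hv0
        have hMeq : ∀ w, w ∈ (RegularExpression.comp p q).matches' ↔ w ∈ p.matches' := by
          intro w
          rw [hmem]
          constructor
          · rintro ⟨u, hu, v, hv, rfl⟩
            rw [hq v hv]; simpa using hu
          · intro hw
            exact ⟨w, hw, [], hv₀, by simp⟩
        have hinfp : Set.Infinite (p.matches' : Set (List α)) := by
          intro hfin
          exact hinf (hfin.subset fun w hw => (hMeq w).1 hw)
        have ihp := eventually_AP p c hnd'.1
          (fun w₁ h₁ w₂ h₂ => hch w₁ ((hMeq w₁).2 h₁) w₂ ((hMeq w₂).2 h₂))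
          (fun w hw => hpos w ((hMeq w).2 hw)) hinfp
        obtain ⟨t, d, hd, hap⟩ := ihp
        refine ⟨t, d, hd, fun n hn => ?_⟩
        rw [← hap n hn]
        constructor
        · rintro ⟨w, hw, rfl⟩; exact ⟨w, (hMeq w).1 hw, rfl⟩
        · rintro ⟨w, hw, rfl⟩; exact ⟨w, (hMeq w).2 hw, rfl⟩
      · push_neg at hq
        obtain ⟨v₁, hv₁, hv₁0⟩ := hq
        have hps : ∀ u₁ ∈ p.matches', ∀ u₂ ∈ p.matches', u₁ = u₂ := by
          have key : ∀ u₁ ∈ p.matches', ∀ u₂ ∈ p.matches',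
              u₁.length < u₂.length → False := by
            intro u₁ h₁ u₂ h₂ hlen
            have m₁ : u₁ ++ v₁ ∈ (RegularExpression.comp p q).matches' :=
              (hmem _).2 ⟨u₁, h₁, v₁, hv₁, rfl⟩
            have m₂ : u₂ ++ v₁ ∈ (RegularExpression.comp p q).matches' :=
              (hmem _).2 ⟨u₂, h₂, v₁, hv₁, rfl⟩
            have hpre : u₁ ++ v₁ <+: u₂ ++ v₁ := by
              rcases hch _ m₁ _ m₂ with h | h
              · exact h
              · exfalso
                have := h.length_le
                simp only [List.length_append] at this
                omega
            obtain ⟨x, v₁', rfl⟩ := List.exists_cons_of_ne_nil hv₁0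
            have hx1 : (u₁ ++ x :: v₁')[u₁.length]? = some x := by
              rw [List.getElem?_append_right le_rfl]
              simp
            have hx2 : (u₂ ++ x :: v₁')[u₁.length]? = some x := by
              obtain ⟨t, ht⟩ := hpre
              rw [← ht, List.getElem?_append_left (by simp)]
              exact hx1
            rw [List.getElem?_append_left hlen] at hx2
            have hxu₂ : x ∈ u₂ := List.mem_of_getElem? hx2
            exact hnd'.2.2 (mem_rchars_of_matches p _ h₂ x hxu₂)
              (mem_rchars_of_matches q _ hv₁ x (by simp))
          intro u₁ h₁ u₂ h₂
          rcases Nat.lt_trichotomy u₁.length u₂.length with h | h | h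
          · exact absurd (key u₁ h₁ u₂ h₂ h) id
          · have m₁ : u₁ ++ v₁ ∈ (RegularExpression.comp p q).matches' :=
              (hmem _).2 ⟨u₁, h₁, v₁, hv₁, rfl⟩
            have m₂ : u₂ ++ v₁ ∈ (RegularExpression.comp p q).matches' :=
              (hmem _).2 ⟨u₂, h₂, v₁, hv₁, rfl⟩
            have heq : u₁ ++ v₁ = u₂ ++ v₁ := by
              rcases hch _ m₁ _ m₂ with hp | hp
              · exact hp.eq_of_length (by simp [h])
              · exact (hp.eq_of_length (by simp [h])).symm
            exact List.append_cancel_right heq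
          · exact absurd (key u₂ h₂ u₁ h₁ h) id
        have hMeq : ∀ w, w ∈ (RegularExpression.comp p q).matches' ↔
            ∃ v ∈ q.matches', u₀ ++ v = w := by
          intro w
          rw [hmem]
          constructor
          · rintro ⟨u, hu, v, hv, rfl⟩
            rw [hps u hu u₀ hu₀]
            exact ⟨v, hv, rfl⟩
          · rintro ⟨v, hv, rfl⟩
            exact ⟨u₀, hu₀, v, hv, rfl⟩
        have hinfq : Set.Infinite (q.matches' : Set (List α)) := by
          intro hfin
          apply hinf
          apply Set.Finite.subset (hfin.image (fun v => u₀ ++ v))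
          intro w hw
          obtain ⟨v, hv, rfl⟩ := (hMeq w).1 hw
          exact ⟨v, hv, rfl⟩
        have ihq := eventually_AP q c hnd'.2.1
          (fun v₁' h₁ v₂' h₂ => by
            have := hch _ ((hMeq _).2 ⟨v₁', h₁, rfl⟩) _ ((hMeq _).2 ⟨v₂', h₂, rfl⟩)
            rcases this with h | h
            · exact Or.inl ((List.prefix_append_right_inj u₀).1 h)
            · exact Or.inr ((List.prefix_append_right_inj u₀).1 h))
          (fun v hv x hx => hpos _ ((hMeq _).2 ⟨v, hv, rfl⟩) x (by simp [hx])) hinfq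
        obtain ⟨t, d, hd, hap⟩ := ihq
        set s₀ := (u₀.map c).sum with hs₀
        refine ⟨t + s₀, d, hd, fun n hn => ?_⟩
        have harr : (n - s₀) - t = n - (t + s₀) := by omega
        rw [← harr, ← hap (n - s₀) (by omega)]
        constructor
        · rintro ⟨w, hw, rfl⟩
          obtain ⟨v, hv, rfl⟩ := (hMeq _).1 hw
          refine ⟨v, hv, ?_⟩
          simp [List.sum_append, hs₀]
        · rintro ⟨v, hv, hvs⟩
          refine ⟨u₀ ++ v, (hMeq _).2 ⟨v, hv, rfl⟩, ?_⟩
          have : ((u₀ ++ v).map c).sum = s₀ + (v.map c).sum := by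
            simp [List.sum_append, hs₀]
          rw [this, hvs]
          have hs₀n : s₀ ≤ n := by omega
          omega
  | RegularExpression.star p, c, _, hch, hpos, hinf => by
      have hmem : ∀ w, w ∈ (RegularExpression.star p).matches' ↔
          ∃ S : List (List α), w = S.flatten ∧ ∀ y ∈ S, y ∈ p.matches' := by
        intro w; simp only [RegularExpression.matches']; exact Language.mem_kstar
      have hnil : [] ∈ (RegularExpression.star p).matches' :=
        (hmem _).2 ⟨[], rfl, by simp⟩
      have happ : ∀ w₁ ∈ (RegularExpression.star p).matches',
          ∀ w₂ ∈ (RegularExpression.star p).matches',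
          w₁ ++ w₂ ∈ (RegularExpression.star p).matches' := by
        intro w₁ h₁ w₂ h₂
        obtain ⟨S₁, rfl, hS₁⟩ := (hmem _).1 h₁
        obtain ⟨S₂, rfl, hS₂⟩ := (hmem _).1 h₂
        refine (hmem _).2 ⟨S₁ ++ S₂, by simp, fun y hy => ?_⟩
        rcases List.mem_append.1 hy with h | h
        · exact hS₁ y h
        · exact hS₂ y h
      set W : Set ℕ := {n | ∃ w ∈ (RegularExpression.star p).matches', (w.map c).sum = n}
        with hW
      have h0 : 0 ∈ W := ⟨[], hnil, rfl⟩
      have hadd : ∀ a ∈ W, ∀ b ∈ W, a + b ∈ W := by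
        rintro a ⟨w₁, h₁, rfl⟩ b ⟨w₂, h₂, rfl⟩
        exact ⟨w₁ ++ w₂, happ _ h₁ _ h₂, by simp [List.sum_append]⟩
      have hposW : ∃ a ∈ W, 0 < a := by
        have : ∃ w ∈ (RegularExpression.star p).matches', w ≠ [] := by
          by_contra hc
          push_neg at hc
          exact hinf (Set.Finite.subset (Set.finite_singleton []) fun w hw => hc w hw)
        obtain ⟨w, hw, hw0⟩ := this
        obtain ⟨x, w', rfl⟩ := List.exists_cons_of_ne_nil hw0
        refine ⟨((x :: w').map c).sum, ⟨_, hw, rfl⟩, ?_⟩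
        have := hpos _ hw x (by simp)
        simp only [List.map_cons, List.sum_cons]
        omega
      obtain ⟨d, N, hd, hiff⟩ := num_semigroup W h0 hadd hposW
      refine ⟨d * N, d, hd, fun n hn => ?_⟩
      have hNn : N ≤ n := le_trans (Nat.le_mul_of_pos_left _ hd) hn
      rw [show (n ∈ {n | ∃ w ∈ (RegularExpression.star p).matches', (w.map c).sum = n}) =
        (n ∈ W) from rfl]
      rw [hiff n hNn]
      constructor
      · intro h
        exact (Nat.dvd_sub h ⟨N, rfl⟩)
      · intro h
        have : n = (n - d * N) + d * N := by omega
        rw [this]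
        exact Nat.dvd_add h ⟨N, rfl⟩

end EventuallyAP


section NotBlock

/-- The unary language `(a^{2k+1})* (ε + a^k)`, described by lengths. -/
def Lk (k : ℕ) : Set (List Unit) :=
  {w | ∃ m, w.length = m * (2 * k + 1) ∨ w.length = m * (2 * k + 1) + k}

lemma mem_glushkov_step_none {π β : Type*} (M : Set (List π)) (f : π → β) (b : β) (s : Option π) :
    s ∈ (glushkov M f).step none b ↔ ∃ y, y ∈ LFirst M ∧ f y = b ∧ s = some y := Iff.rfl

lemma mem_glushkov_step_some {π β : Type*} (M : Set (List π)) (f : π → β) (x : π) (b : β)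
    (s : Option π) :
    s ∈ (glushkov M f).step (some x) b ↔ ∃ y, y ∈ LFollow M x ∧ f y = b ∧ s = some y := Iff.rfl

lemma Lk_infinite (k : ℕ) : Set.Infinite (Lk k) := by
  refine Set.infinite_of_injective_forall_mem
    (f := fun m : ℕ => List.replicate (m * (2 * k + 1)) ()) ?_ ?_
  · intro m₁ m₂ h
    have := congrArg List.length h
    simp only [List.length_replicate] at this
    exact Nat.eq_of_mul_eq_mul_right (by omega) this
  · intro m
    exact ⟨m, Or.inl (by simp)⟩

lemma Lk_not_block (k : ℕ) (hk : 1 ≤ k) (m : ℕ) : ¬ IsKBlockDet (Lk k) m := by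
  rintro ⟨π, E, f, hnd, ⟨-, hblen, hbpre⟩, hL⟩
  set M : Set (List π) := (E.matches' : Set (List π)) with hM
  -- First and Follow sets are subsingletons, by unary prefix-comparability
  have hFsub : ∀ y₁ ∈ LFirst M, ∀ y₂ ∈ LFirst M, y₁ = y₂ := by
    intro y₁ h₁ y₂ h₂
    by_contra hne
    have hpair : ((f y₁ : List Unit), (some y₁ : Option π)) ≠ (f y₂, some y₂) := by
      intro h
      exact hne (Option.some_injective _ (congrArg Prod.snd h))
    have hpair' : ((f y₂ : List Unit), (some y₂ : Option π)) ≠ (f y₁, some y₁) :=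
      fun h => hpair h.symm
    have h12 := hbpre none (f y₁) (f y₂) (some y₁) (some y₂)
      ((mem_glushkov_step_none M f _ _).2 ⟨y₁, h₁, rfl, rfl⟩)
      ((mem_glushkov_step_none M f _ _).2 ⟨y₂, h₂, rfl, rfl⟩) hpair
    have h21 := hbpre none (f y₂) (f y₁) (some y₂) (some y₁)
      ((mem_glushkov_step_none M f _ _).2 ⟨y₂, h₂, rfl, rfl⟩)
      ((mem_glushkov_step_none M f _ _).2 ⟨y₁, h₁, rfl, rfl⟩) hpair'
    rcases unit_prefix_total (f y₁) (f y₂) with h | h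
    · exact h12 h
    · exact h21 h
  have hFolsub : ∀ x : π, ∀ y₁ ∈ LFollow M x, ∀ y₂ ∈ LFollow M x, y₁ = y₂ := by
    intro x y₁ h₁ y₂ h₂
    by_contra hne
    have hpair : ((f y₁ : List Unit), (some y₁ : Option π)) ≠ (f y₂, some y₂) := by
      intro h
      exact hne (Option.some_injective _ (congrArg Prod.snd h))
    have hpair' : ((f y₂ : List Unit), (some y₂ : Option π)) ≠ (f y₁, some y₁) :=
      fun h => hpair h.symm
    have h12 := hbpre (some x) (f y₁) (f y₂) (some y₁) (some y₂)
      ((mem_glushkov_step_some M f x _ _).2 ⟨y₁, h₁, rfl, rfl⟩)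
      ((mem_glushkov_step_some M f x _ _).2 ⟨y₂, h₂, rfl, rfl⟩) hpair
    have h21 := hbpre (some x) (f y₂) (f y₁) (some y₂) (some y₁)
      ((mem_glushkov_step_some M f x _ _).2 ⟨y₂, h₂, rfl, rfl⟩)
      ((mem_glushkov_step_some M f x _ _).2 ⟨y₁, h₁, rfl, rfl⟩) hpair'
    rcases unit_prefix_total (f y₁) (f y₂) with h | h
    · exact h12 h
    · exact h21 h
  -- positivity of the block lengths of used positions
  have hposM : ∀ w ∈ M, ∀ x ∈ w, 1 ≤ (f x).length := by
    intro w hw x hx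
    rcases mem_first_or_follow hw x hx with h | ⟨z, h⟩
    · exact (hblen none (f x) ⟨some x, (mem_glushkov_step_none M f _ _).2 ⟨x, h, rfl, rfl⟩⟩).1
    · exact (hblen (some z) (f x)
        ⟨some x, (mem_glushkov_step_some M f z _ _).2 ⟨x, h, rfl, rfl⟩⟩).1
  -- M is an infinite chain
  have hch := chain_of_det hFsub hFolsub
  have hMinf : Set.Infinite M := by
    intro hfin
    apply Lk_infinite k
    have : Lk k = (fun ws : List π => ((ws.map f).flatten)) '' M := by
      rw [hL]
      ext w
      simp only [Set.mem_image, Set.mem_setOf_eq]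
      exact Iff.rfl
    rw [this]
    exact hfin.image _
  obtain ⟨t, d, hd, hap⟩ := eventually_AP E (fun x => (f x).length) hnd hch hposM hMinf
  -- characterize the weight set
  have hflatlen : ∀ w : List π, ((w.map f).flatten).length =
      (w.map (fun x => (f x).length)).sum := by
    intro w
    rw [List.length_flatten, List.map_map]
    rfl
  have hWiff : ∀ n, (∃ w ∈ M, (w.map (fun x => (f x).length)).sum = n) ↔
      (∃ m', n = m' * (2 * k + 1) ∨ n = m' * (2 * k + 1) + k) := by
    intro n
    constructor
    · rintro ⟨w, hw, rfl⟩
      have hmem : ((w.map f).flatten) ∈ Lk k := by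
        rw [hL]; exact ⟨w, hw, rfl⟩
      obtain ⟨m', hm'⟩ := hmem
      rw [hflatlen w] at hm'
      exact ⟨m', by omega⟩
    · rintro ⟨m', hm'⟩
      have hrep : List.replicate n () ∈ Lk k := ⟨m', by simpa using hm'⟩
      rw [hL] at hrep
      obtain ⟨ws, hws, hflat⟩ := hrep
      refine ⟨ws, hws, ?_⟩
      have := congrArg List.length hflat
      rw [hflatlen ws] at this
      simpa using this
  -- derive d = 1
  set a := t * (2 * k + 1) with ha
  have hta : t ≤ a := Nat.le_mul_of_pos_right t (by omega)
  have d1 : d ∣ a - t := (hap a (by omega)).1 (hWiff a |>.2 ⟨t, Or.inl rfl⟩)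
  have d2 : d ∣ a + k - t := (hap (a + k) (by omega)).1 (hWiff (a + k) |>.2 ⟨t, Or.inr rfl⟩)
  have d3 : d ∣ a + (2 * k + 1) - t := (hap (a + (2 * k + 1)) (by omega)).1
    (hWiff (a + (2 * k + 1)) |>.2 ⟨t + 1, Or.inl (by ring)⟩)
  have dk : d ∣ k := by
    have := Nat.dvd_sub d2 d1
    rwa [show a + k - t - (a - t) = k by omega] at this
  have d2k1 : d ∣ 2 * k + 1 := by
    have := Nat.dvd_sub d3 d1
    rwa [show a + (2 * k + 1) - t - (a - t) = 2 * k + 1 by omega] at this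
  have hd1 : d = 1 := by
    have h2k : d ∣ 2 * k := by
      have := Nat.dvd_add dk dk
      rwa [show k + k = 2 * k by omega] at this
    have := Nat.dvd_sub d2k1 h2k
    rw [show 2 * k + 1 - 2 * k = 1 by omega] at this
    exact Nat.dvd_one.mp this
  -- now a + k + 1 must be in the weight set: contradiction
  have hbad : ∃ m', a + k + 1 = m' * (2 * k + 1) ∨ a + k + 1 = m' * (2 * k + 1) + k := by
    apply (hWiff (a + k + 1)).1
    refine (hap (a + k + 1) (by omega)).2 ?_
    rw [hd1]
    exact one_dvd _
  obtain ⟨m', hm'⟩ := hbad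
  rcases hm' with h | h
  · have hcomm : (2 * k + 1) * t = t * (2 * k + 1) := Nat.mul_comm _ _
    have hcomm' : (2 * k + 1) * m' = m' * (2 * k + 1) := Nat.mul_comm _ _
    have hx : ((2 * k + 1) * t + (k + 1)) % (2 * k + 1) = 0 := by
      have hshape : (2 * k + 1) * t + (k + 1) = (2 * k + 1) * m' := by omega
      rw [hshape]
      simp [Nat.mul_mod_right]
    rw [Nat.mul_add_mod] at hx
    rw [Nat.mod_eq_of_lt (by omega)] at hx
    omega
  · have hcomm : (2 * k + 1) * t = t * (2 * k + 1) := Nat.mul_comm _ _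
    have hcomm' : (2 * k + 1) * m' = m' * (2 * k + 1) := Nat.mul_comm _ _
    have hx : ((2 * k + 1) * t + 1) % (2 * k + 1) = 0 := by
      have hshape : (2 * k + 1) * t + 1 = (2 * k + 1) * m' := by omega
      rw [hshape]
      simp [Nat.mul_mod_right]
    rw [Nat.mul_add_mod] at hx
    rw [Nat.mod_eq_of_lt (by omega)] at hx
    omega

end NotBlock


section LkLA

/-- Cycle positions. -/
def Xl (k : ℕ) : List (ℕ ⊕ ℕ) := (List.range (2 * k + 1)).map Sum.inl

/-- Tail positions. -/
def Yl (k : ℕ) : List (ℕ ⊕ ℕ) := (List.range k).map Sum.inr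

/-- The marked expression `(x₀⋯x₂ₖ)* (ε + y₀⋯y_{k-1})`. -/
def Ek (k : ℕ) : RegularExpression (ℕ ⊕ ℕ) :=
  RegularExpression.comp (RegularExpression.star (chainExpr (Xl k)))
    (RegularExpression.plus RegularExpression.epsilon (chainExpr (Yl k)))

/-- The allowed adjacencies in words of `Ek`. -/
def Rk (k : ℕ) : (ℕ ⊕ ℕ) → (ℕ ⊕ ℕ) → Prop
  | Sum.inl i, Sum.inl j => (i + 1 < 2 * k + 1 ∧ j = i + 1) ∨ (i = 2 * k ∧ j = 0)
  | Sum.inl i, Sum.inr j => i = 2 * k ∧ j = 0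
  | Sum.inr i, Sum.inr j => j = i + 1 ∧ j < k
  | Sum.inr _, Sum.inl _ => False

lemma rchars_Ek (k : ℕ) : rchars (Ek k) = Xl k ++ Yl k := by
  show rchars (chainExpr (Xl k)) ++ ([] ++ rchars (chainExpr (Yl k))) = _
  rw [rchars_chainExpr, rchars_chainExpr, List.nil_append]

lemma nodup_rchars_Ek (k : ℕ) : (rchars (Ek k)).Nodup := by
  rw [rchars_Ek, List.nodup_append]
  refine ⟨List.Nodup.map Sum.inl_injective List.nodup_range,
    List.Nodup.map Sum.inr_injective List.nodup_range, ?_⟩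
  intro a ha b hb heq
  obtain ⟨i, -, rfl⟩ := List.mem_map.1 ha
  obtain ⟨j, -, hj⟩ := List.mem_map.1 hb
  exact absurd hj (by rw [← heq]; simp)

lemma star_chain_mem (k m : ℕ) :
    (List.replicate m (Xl k)).flatten ∈ (RegularExpression.star (chainExpr (Xl k))).matches' := by
  rw [RegularExpression.matches'_star, Language.mem_kstar]
  exact ⟨List.replicate m (Xl k), rfl, fun y hy => by
    rw [matches'_chainExpr]; exact List.eq_of_mem_replicate hy⟩

lemma mem_Ek (k : ℕ) (w : List (ℕ ⊕ ℕ)) : w ∈ (Ek k).matches' ↔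
    ∃ m, w = (List.replicate m (Xl k)).flatten ∨
      w = (List.replicate m (Xl k)).flatten ++ Yl k := by
  show w ∈ ((RegularExpression.star (chainExpr (Xl k))).matches' *
    (RegularExpression.plus RegularExpression.epsilon (chainExpr (Yl k))).matches') ↔ _
  rw [Language.mem_mul]
  constructor
  · rintro ⟨u, hu, v, hv, rfl⟩
    rw [RegularExpression.matches'_star, Language.mem_kstar] at hu
    obtain ⟨S, rfl, hS⟩ := hu
    have hSrep : S = List.replicate S.length (Xl k) := by
      apply List.eq_replicate_of_mem
      intro b hb
      have := hS b hb
      rw [matches'_chainExpr] at this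
      exact this
    have hv' : v ∈ RegularExpression.epsilon.matches' ∨ v ∈ (chainExpr (Yl k)).matches' := by
      have hv2 : v ∈ (RegularExpression.epsilon.matches' + (chainExpr (Yl k)).matches') := hv
      rwa [Language.mem_add] at hv2
    rcases hv' with h | h
    · have hvnil : v = [] := h
      subst hvnil
      exact ⟨S.length, Or.inl (by rw [← hSrep]; simp)⟩
    · rw [matches'_chainExpr] at h
      have hvy : v = Yl k := h
      subst hvy
      exact ⟨S.length, Or.inr (by rw [← hSrep])⟩
  · rintro ⟨m, h | h⟩ <;> subst h
    · exact ⟨(List.replicate m (Xl k)).flatten, star_chain_mem k m, [],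
        (Language.mem_add _ _ _).2 (Or.inl rfl), by simp⟩
    · exact ⟨(List.replicate m (Xl k)).flatten, star_chain_mem k m, Yl k,
        (Language.mem_add _ _ _).2 (Or.inr (by rw [matches'_chainExpr]; rfl)), rfl⟩

lemma Xl_cons (k : ℕ) : Xl k = Sum.inl 0 :: (List.range (2 * k)).map (Sum.inl ∘ Nat.succ) := by
  rw [Xl, List.range_succ_eq_map]
  simp

lemma Yl_cons (k : ℕ) (hk : 1 ≤ k) :
    Yl k = Sum.inr 0 :: (List.range (k - 1)).map (Sum.inr ∘ Nat.succ) := by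
  obtain ⟨k', rfl⟩ : ∃ k', k = k' + 1 := ⟨k - 1, by omega⟩
  rw [Yl, List.range_succ_eq_map]
  simp

lemma Xl_getLast (k : ℕ) : (Xl k).getLast? = some (Sum.inl (2 * k)) := by
  rw [Xl, List.range_succ, List.map_append]
  simp

lemma chain_Xl (k : ℕ) : (Xl k).Chain' (Rk k) := by
  rw [Xl, List.Chain', List.isChain_map]
  rw [show 2 * k + 1 = (2 * k) + 1 from rfl, List.isChain_range_succ]
  intro m hm
  exact Or.inl ⟨by omega, rfl⟩

lemma chain_Yl (k : ℕ) : (Yl k).Chain' (Rk k) := by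
  rcases Nat.eq_zero_or_pos k with rfl | hk
  · simp [Yl, List.Chain']
  · obtain ⟨k', rfl⟩ : ∃ k', k = k' + 1 := ⟨k - 1, by omega⟩
    rw [Yl, List.Chain', List.isChain_map, List.isChain_range_succ]
    intro m hm
    exact ⟨rfl, by omega⟩

lemma head_flat (k : ℕ) : ∀ (m : ℕ) (t : List (ℕ ⊕ ℕ)), (t = [] ∨ t = Yl k) → 1 ≤ k →
    ∀ a ∈ ((List.replicate m (Xl k)).flatten ++ t).head?, a = Sum.inl 0 ∨ a = Sum.inr 0 := by
  intro m t ht hk a ha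
  cases m with
  | zero =>
    simp only [List.replicate, List.flatten_nil, List.nil_append] at ha
    rcases ht with rfl | rfl
    · simp at ha
    · rw [Yl_cons k hk] at ha
      simp at ha
      exact Or.inr ha.symm
  | succ m =>
    rw [List.replicate_succ, List.flatten_cons, List.append_assoc, Xl_cons] at ha
    simp at ha
    exact Or.inl ha.symm

lemma chain_flat (k : ℕ) (hk : 1 ≤ k) :
    ∀ (m : ℕ) (t : List (ℕ ⊕ ℕ)), (t = [] ∨ t = Yl k) →
    ((List.replicate m (Xl k)).flatten ++ t).Chain' (Rk k) := by
  intro m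
  induction m with
  | zero =>
    rintro t (rfl | rfl)
    · simp [List.Chain']
    · simpa using chain_Yl k
  | succ m ih =>
    intro t ht
    rw [List.replicate_succ, List.flatten_cons, List.append_assoc]
    rw [List.Chain', List.isChain_append]
    refine ⟨chain_Xl k, ih t ht, ?_⟩
    intro x hx y hy
    rw [Xl_getLast] at hx
    have hx' : Sum.inl (2 * k) = x := by simpa using hx
    subst hx'
    rcases head_flat k m t ht hk y hy with rfl | rfl
    · exact Or.inr ⟨rfl, rfl⟩
    · exact ⟨rfl, rfl⟩

lemma struct_Ek (k : ℕ) (hk : 1 ≤ k) : ∀ w ∈ (Ek k).matches',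
    (∀ a ∈ w.head?, a = Sum.inl 0 ∨ a = Sum.inr 0) ∧ w.Chain' (Rk k) := by
  intro w hw
  obtain ⟨m, h | h⟩ := (mem_Ek k w).1 hw
  · subst h
    have h1 := head_flat k m [] (Or.inl rfl) hk
    have h2 := chain_flat k hk m [] (Or.inl rfl)
    rw [List.append_nil] at h1 h2
    exact ⟨h1, h2⟩
  · subst h
    exact ⟨head_flat k m _ (Or.inr rfl) hk, chain_flat k hk m _ (Or.inr rfl)⟩

lemma first_Ek (k : ℕ) (hk : 1 ≤ k) :
    ∀ y ∈ LFirst ((Ek k).matches' : Set (List (ℕ ⊕ ℕ))), y = Sum.inl 0 ∨ y = Sum.inr 0 := by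
  rintro y ⟨w', hw'⟩
  exact (struct_Ek k hk _ hw').1 y rfl

lemma follow_Ek (k : ℕ) (hk : 1 ≤ k) :
    ∀ x, ∀ y ∈ LFollow ((Ek k).matches' : Set (List (ℕ ⊕ ℕ))) x, Rk k x y := by
  rintro x y ⟨u, v, huv⟩
  exact chain'_extract (struct_Ek k hk _ huv).2 rfl

lemma dead_inr (k : ℕ) (hk : 1 ≤ k) :
    ∀ (w : List Unit) (j : ℕ), j < k → k - j ≤ w.length →
      (glushkov (Ek k).matches' (fun _ => ())).evalFrom {some (Sum.inr j)} w = ∅ := by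
  set A := glushkov (Ek k).matches' (fun _ : ℕ ⊕ ℕ => ()) with hA
  intro w
  induction w with
  | nil => intro j h1 h2; simp at h2; omega
  | cons b w' ih =>
    intro j h1 h2
    rw [evalFrom_cons]
    have hss : A.stepSet {some (Sum.inr j)} b ⊆ A.step (some (Sum.inr j)) b := by
      intro q hq
      rw [NFA.mem_stepSet] at hq
      obtain ⟨t', ht', hq⟩ := hq
      rw [Set.mem_singleton_iff] at ht'
      subst ht'
      exact hq
    by_cases hjk : j + 1 < k
    · have hsub : A.step (some (Sum.inr j)) b ⊆ {some (Sum.inr (j + 1))} := by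
        rintro q ⟨y, hy, -, rfl⟩
        have hr := follow_Ek k hk _ _ hy
        cases y with
        | inl i => exact absurd hr (by simp [Rk])
        | inr i =>
          obtain ⟨rfl, -⟩ := hr
          rfl
      apply Set.subset_empty_iff.1
      calc A.evalFrom (A.stepSet {some (Sum.inr j)} b) w'
          ⊆ A.evalFrom {some (Sum.inr (j + 1))} w' := evalFrom_mono A (hss.trans hsub) w'
        _ ⊆ ∅ := by
            rw [ih (j + 1) hjk (by simp at h2 ⊢; omega)]
    · have hsub : A.step (some (Sum.inr j)) b ⊆ (∅ : Set (Option (ℕ ⊕ ℕ))) := by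
        rintro q ⟨y, hy, -, rfl⟩
        have hr := follow_Ek k hk _ _ hy
        cases y with
        | inl i => exact absurd hr (by simp [Rk])
        | inr i =>
          obtain ⟨rfl, hlt⟩ := hr
          omega
      exact evalFrom_eq_empty A (hss.trans hsub) w'

lemma kLA_Ek (k : ℕ) (hk : 1 ≤ k) :
    kLA (glushkov (Ek k).matches' (fun _ : ℕ ⊕ ℕ => ())) (k + 1) := by
  set A := glushkov (Ek k).matches' (fun _ : ℕ ⊕ ℕ => ()) with hA
  refine ⟨⟨none, rfl⟩, ?_⟩
  intro p b q₁ q₂ h₁ h₂ hne w hw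
  have hwlen : w.length = k := by simpa using hw
  have hkill : ∀ y₁ y₂ : ℕ ⊕ ℕ, q₁ = some y₁ → q₂ = some y₂ →
      (y₁ = Sum.inl 0 ∨ y₁ = Sum.inr 0) → (y₂ = Sum.inl 0 ∨ y₂ = Sum.inr 0) →
      A.evalFrom {q₁} w = ∅ ∨ A.evalFrom {q₂} w = ∅ := by
    rintro y₁ y₂ rfl rfl hy₁ hy₂
    have hyne : y₁ ≠ y₂ := fun h => hne (by rw [h])
    rcases hy₁ with rfl | rfl
    · rcases hy₂ with rfl | rfl
      · exact absurd rfl hyne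
      · exact Or.inr (dead_inr k hk w 0 (by omega) (by omega))
    · exact Or.inl (dead_inr k hk w 0 (by omega) (by omega))
  cases p with
  | none =>
    obtain ⟨y₁, hy₁, -, rfl⟩ := h₁
    obtain ⟨y₂, hy₂, -, rfl⟩ := h₂
    exact hkill y₁ y₂ rfl rfl (first_Ek k hk _ hy₁) (first_Ek k hk _ hy₂)
  | some x =>
    obtain ⟨y₁, hy₁, -, rfl⟩ := h₁
    obtain ⟨y₂, hy₂, -, rfl⟩ := h₂
    have hr₁ := follow_Ek k hk _ _ hy₁
    have hr₂ := follow_Ek k hk _ _ hy₂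
    cases x with
    | inl i =>
      by_cases hi : i = 2 * k
      · subst hi
        have hy₁' : y₁ = Sum.inl 0 ∨ y₁ = Sum.inr 0 := by
          cases y₁ with
          | inl j =>
            rcases hr₁ with ⟨h', rfl⟩ | ⟨-, rfl⟩
            · omega
            · exact Or.inl rfl
          | inr j =>
            obtain ⟨-, rfl⟩ := hr₁
            exact Or.inr rfl
        have hy₂' : y₂ = Sum.inl 0 ∨ y₂ = Sum.inr 0 := by
          cases y₂ with
          | inl j =>
            rcases hr₂ with ⟨h', rfl⟩ | ⟨-, rfl⟩
            · omega
            · exact Or.inl rfl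
          | inr j =>
            obtain ⟨-, rfl⟩ := hr₂
            exact Or.inr rfl
        exact hkill y₁ y₂ rfl rfl hy₁' hy₂'
      · exfalso
        have hy₁' : y₁ = Sum.inl (i + 1) := by
          cases y₁ with
          | inl j =>
            rcases hr₁ with ⟨-, rfl⟩ | ⟨h', -⟩
            · rfl
            · exact absurd h' hi
          | inr j => exact absurd hr₁.1 hi
        have hy₂' : y₂ = Sum.inl (i + 1) := by
          cases y₂ with
          | inl j =>
            rcases hr₂ with ⟨-, rfl⟩ | ⟨h', -⟩
            · rfl
            · exact absurd h' hi
          | inr j => exact absurd hr₂.1 hi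
        exact hne (by rw [hy₁', hy₂'])
    | inr i =>
      exfalso
      have hy₁' : y₁ = Sum.inr (i + 1) := by
        cases y₁ with
        | inl j => exact absurd hr₁ (by simp [Rk])
        | inr j => rw [hr₁.1]
      have hy₂' : y₂ = Sum.inr (i + 1) := by
        cases y₂ with
        | inl j => exact absurd hr₂ (by simp [Rk])
        | inr j => rw [hr₂.1]
      exact hne (by rw [hy₁', hy₂'])

lemma length_Xl (k : ℕ) : (Xl k).length = 2 * k + 1 := by
  rw [Xl, List.length_map, List.length_range]

lemma length_Yl (k : ℕ) : (Yl k).length = k := by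
  rw [Yl, List.length_map, List.length_range]

lemma flat_len (k : ℕ) : ∀ m, ((List.replicate m (Xl k)).flatten).length = m * (2 * k + 1) := by
  intro m
  induction m with
  | zero => simp
  | succ m ih =>
    rw [List.replicate_succ, List.flatten_cons, List.length_append, ih, length_Xl,
      Nat.succ_mul m (2 * k + 1)]
    omega

lemma lang_Ek (k : ℕ) : Lk k =
    {w | ∃ ws ∈ (Ek k).matches', ws.map (fun _ : ℕ ⊕ ℕ => ()) = w} := by
  ext w
  constructor
  · rintro ⟨m, hm⟩
    rcases hm with h | h
    · refine ⟨(List.replicate m (Xl k)).flatten, (mem_Ek k _).2 ⟨m, Or.inl rfl⟩, ?_⟩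
      apply unit_list_eq_of_length
      rw [List.length_map, flat_len, h]
    · refine ⟨(List.replicate m (Xl k)).flatten ++ Yl k, (mem_Ek k _).2 ⟨m, Or.inr rfl⟩, ?_⟩
      apply unit_list_eq_of_length
      rw [List.length_map, List.length_append, flat_len, length_Yl, h]
  · rintro ⟨ws, hws, rfl⟩
    obtain ⟨m, h | h⟩ := (mem_Ek k ws).1 hws <;> subst h
    · exact ⟨m, Or.inl (by rw [List.length_map, flat_len])⟩
    · exact ⟨m, Or.inr (by rw [List.length_map, List.length_append, flat_len, length_Yl])⟩

lemma Lk_LA (k : ℕ) (hk : 1 ≤ k) : IsKLookaheadDet (Lk k) (k + 1) :=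
  ⟨ℕ ⊕ ℕ, Ek k, fun _ => (), nodup_rchars_Ek k, kLA_Ek k hk, lang_Ek k⟩

end LkLA


section Expand

variable {γ : Type} {π : Type}

/-- The list of expanded positions of a block position. -/
def blkE (f : π → List γ) (x : π) : List (π × ℕ) :=
  (List.range (f x).length).map (fun i => (x, i))

/-- Expansion of a word of block positions. -/
def expw (f : π → List γ) (w : List π) : List (π × ℕ) := w.flatMap (blkE f)

/-- The expanded set of marked words. -/
def expSet (f : π → List γ) (M : Set (List π)) : Set (List (π × ℕ)) :=
  {w' | ∃ w ∈ M, expw f w = w'}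

/-- The labelling of expanded positions. -/
def fexp [Inhabited γ] (f : π → List γ) : π × ℕ → γ := fun p => (f p.1).getD p.2 default

/-- Expansion of a block regular expression to an ordinary one. -/
def expandE (f : π → List γ) : RegularExpression π → RegularExpression (π × ℕ)
  | RegularExpression.zero => RegularExpression.zero
  | RegularExpression.epsilon => RegularExpression.epsilon
  | RegularExpression.char x => chainExpr (blkE f x)
  | RegularExpression.plus p q => RegularExpression.plus (expandE f p) (expandE f q)
  | RegularExpression.comp p q => RegularExpression.comp (expandE f p) (expandE f q)
  | RegularExpression.star p => RegularExpression.star (expandE f p)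

lemma expw_nil (f : π → List γ) : expw f [] = [] := rfl

lemma expw_cons (f : π → List γ) (x : π) (w : List π) :
    expw f (x :: w) = blkE f x ++ expw f w := rfl

lemma expw_append (f : π → List γ) (u v : List π) :
    expw f (u ++ v) = expw f u ++ expw f v := List.flatMap_append

lemma expw_flatten (f : π → List γ) : ∀ S : List (List π),
    expw f S.flatten = (S.map (expw f)).flatten
  | [] => rfl
  | a :: S => by
    rw [List.flatten_cons, expw_append, List.map_cons, List.flatten_cons, expw_flatten f S]

lemma exists_preimage_list (f : π → List γ) (M : Set (List π)) :
    ∀ S' : List (List (π × ℕ)), (∀ u' ∈ S', u' ∈ expSet f M) →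
      ∃ S : List (List π), S' = S.map (expw f) ∧ ∀ u ∈ S, u ∈ M
  | [], _ => ⟨[], rfl, by simp⟩
  | a :: S', h => by
    obtain ⟨w, hw, hexp⟩ := h a (by simp)
    obtain ⟨S, hS1, hS2⟩ := exists_preimage_list f M S' (fun u' hu' => h u' (by simp [hu']))
    refine ⟨w :: S, ?_, ?_⟩
    · rw [List.map_cons, hexp, ← hS1]
    · intro u hu
      rcases List.mem_cons.1 hu with rfl | hu
      · exact hw
      · exact hS2 u hu

lemma matches'_expandE (f : π → List γ) :
    ∀ E : RegularExpression π,
      ((expandE f E).matches' : Set (List (π × ℕ))) = expSet f E.matches'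
  | RegularExpression.zero => by
    ext w'
    constructor
    · intro h; exact h.elim
    · rintro ⟨w, hw, -⟩; exact hw.elim
  | RegularExpression.epsilon => by
    ext w'
    constructor
    · intro h
      have : w' = [] := h
      exact ⟨[], rfl, this.symm⟩
    · rintro ⟨w, hw, rfl⟩
      have : w = [] := hw
      subst this
      rfl
  | RegularExpression.char x => by
    ext w'
    show w' ∈ (chainExpr (blkE f x)).matches' ↔ _
    rw [matches'_chainExpr]
    constructor
    · intro h
      have : w' = blkE f x := h
      exact ⟨[x], rfl, by rw [this, expw_cons, expw_nil, List.append_nil]⟩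
    · rintro ⟨w, hw, rfl⟩
      have : w = [x] := hw
      subst this
      rw [expw_cons, expw_nil, List.append_nil]
      rfl
  | RegularExpression.plus p q => by
    ext w'
    show w' ∈ ((expandE f p).matches' + (expandE f q).matches') ↔ _
    rw [Language.mem_add]
    rw [show ((expandE f p).matches' : Set (List (π × ℕ))) = expSet f p.matches' from
      matches'_expandE f p]
    rw [show ((expandE f q).matches' : Set (List (π × ℕ))) = expSet f q.matches' from
      matches'_expandE f q]
    constructor
    · rintro (⟨w, hw, rfl⟩ | ⟨w, hw, rfl⟩)
      · exact ⟨w, (Language.mem_add _ _ _).2 (Or.inl hw), rfl⟩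
      · exact ⟨w, (Language.mem_add _ _ _).2 (Or.inr hw), rfl⟩
    · rintro ⟨w, hw, rfl⟩
      rcases (Language.mem_add _ _ _).1 hw with h | h
      · exact Or.inl ⟨w, h, rfl⟩
      · exact Or.inr ⟨w, h, rfl⟩
  | RegularExpression.comp p q => by
    ext w'
    show w' ∈ ((expandE f p).matches' * (expandE f q).matches') ↔ _
    rw [Language.mem_mul]
    constructor
    · rintro ⟨u', hu', v', hv', rfl⟩
      rw [show ((expandE f p).matches' : Set (List (π × ℕ))) = expSet f p.matches' from
        matches'_expandE f p] at hu'
      rw [show ((expandE f q).matches' : Set (List (π × ℕ))) = expSet f q.matches' from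
        matches'_expandE f q] at hv'
      obtain ⟨u, hu, rfl⟩ := hu'
      obtain ⟨v, hv, rfl⟩ := hv'
      exact ⟨u ++ v, Language.mem_mul.2 ⟨u, hu, v, hv, rfl⟩, (expw_append f u v)⟩
    · rintro ⟨w, hw, rfl⟩
      obtain ⟨u, hu, v, hv, rfl⟩ := Language.mem_mul.1 hw
      refine ⟨expw f u, ?_, expw f v, ?_, (expw_append f u v).symm⟩
      · rw [show ((expandE f p).matches' : Set (List (π × ℕ))) = expSet f p.matches' from
          matches'_expandE f p]
        exact ⟨u, hu, rfl⟩
      · rw [show ((expandE f q).matches' : Set (List (π × ℕ))) = expSet f q.matches' from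
          matches'_expandE f q]
        exact ⟨v, hv, rfl⟩
  | RegularExpression.star p => by
    ext w'
    have hsm : w' ∈ (expandE f (RegularExpression.star p)).matches' ↔
        ∃ S' : List (List (π × ℕ)), w' = S'.flatten ∧ ∀ u' ∈ S', u' ∈ (expandE f p).matches' := by
      rw [show expandE f (RegularExpression.star p) = RegularExpression.star (expandE f p)
        from rfl, RegularExpression.matches'_star]
      exact Language.mem_kstar
    rw [hsm]
    constructor
    · rintro ⟨S', rfl, hS'⟩
      have hS'2 : ∀ u' ∈ S', u' ∈ expSet f p.matches' := by
        intro u' hu'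
        rw [← matches'_expandE f p]
        exact hS' u' hu'
      obtain ⟨S, rfl, hS⟩ := exists_preimage_list f p.matches' S' hS'2
      refine ⟨S.flatten, ?_, expw_flatten f S⟩
      rw [RegularExpression.matches'_star]
      exact Language.mem_kstar.2 ⟨S, rfl, hS⟩
    · rintro ⟨w, hw, rfl⟩
      rw [RegularExpression.matches'_star] at hw
      obtain ⟨S, rfl, hS⟩ := Language.mem_kstar.1 hw
      refine ⟨S.map (expw f), expw_flatten f S, ?_⟩
      intro u' hu'
      obtain ⟨u, hu, rfl⟩ := List.mem_map.1 hu'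
      rw [show ((expandE f p).matches' : Set (List (π × ℕ))) = expSet f p.matches' from
        matches'_expandE f p]
      exact ⟨u, hS u hu, rfl⟩

lemma rchars_expandE (f : π → List γ) :
    ∀ E : RegularExpression π, rchars (expandE f E) = (rchars E).flatMap (blkE f)
  | RegularExpression.zero => rfl
  | RegularExpression.epsilon => rfl
  | RegularExpression.char x => by
    show rchars (chainExpr (blkE f x)) = _
    rw [rchars_chainExpr]
    simp [rchars]
  | RegularExpression.plus p q => by
    show rchars (expandE f p) ++ rchars (expandE f q) = _
    rw [rchars_expandE f p, rchars_expandE f q]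
    exact List.flatMap_append.symm
  | RegularExpression.comp p q => by
    show rchars (expandE f p) ++ rchars (expandE f q) = _
    rw [rchars_expandE f p, rchars_expandE f q]
    exact List.flatMap_append.symm
  | RegularExpression.star p => rchars_expandE f p

lemma nodup_flatMap_blkE (f : π → List γ) :
    ∀ l : List π, l.Nodup → (l.flatMap (blkE f)).Nodup := by
  intro l
  induction l with
  | nil => intro _; simp
  | cons x l ih =>
    intro h
    rw [List.nodup_cons] at h
    rw [List.flatMap_cons, List.nodup_append]
    refine ⟨?_, ih h.2, ?_⟩
    · exact List.Nodup.map (fun i j hij => congrArg Prod.snd hij) List.nodup_range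
    · intro a ha b hb heq
      obtain ⟨i, -, rfl⟩ := List.mem_map.1 ha
      obtain ⟨z, hz, hzb⟩ := List.mem_flatMap.1 hb
      obtain ⟨j, -, hj⟩ := List.mem_map.1 hzb
      have : z = x := congrArg Prod.fst (hj.trans heq.symm)
      exact h.1 (this ▸ hz)

/-- The adjacency relation of expanded words. -/
def Rexp (f : π → List γ) (M : Set (List π)) : (π × ℕ) → (π × ℕ) → Prop := fun a z =>
  (a.2 + 1 < (f a.1).length ∧ z = (a.1, a.2 + 1)) ∨
  ((f a.1).length = a.2 + 1 ∧ z.2 = 0 ∧ z.1 ∈ LFollow M a.1)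

lemma blkE_cons (f : π → List γ) (x : π) (h : 1 ≤ (f x).length) :
    blkE f x = (x, 0) :: (List.range ((f x).length - 1)).map (fun i => (x, i + 1)) := by
  obtain ⟨n, hn⟩ : ∃ n, (f x).length = n + 1 := ⟨(f x).length - 1, by omega⟩
  rw [blkE, hn, List.range_succ_eq_map]
  simp [List.map_map, Function.comp]

lemma getLast?_blkE (f : π → List γ) (x : π) (h : 1 ≤ (f x).length) :
    (blkE f x).getLast? = some (x, (f x).length - 1) := by
  obtain ⟨n, hn⟩ : ∃ n, (f x).length = n + 1 := ⟨(f x).length - 1, by omega⟩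
  rw [blkE, hn, List.range_succ, List.map_append]
  simp

lemma chain'_blkE (f : π → List γ) (M : Set (List π)) (x : π) :
    (blkE f x).Chain' (Rexp f M) := by
  rw [blkE, List.Chain', List.isChain_map]
  obtain h0 | ⟨n, hn⟩ : (f x).length = 0 ∨ ∃ n, (f x).length = n + 1 := by
    rcases h : (f x).length with _ | n
    · exact Or.inl rfl
    · exact Or.inr ⟨n, rfl⟩
  · rw [h0]; simp
  · rw [hn, List.isChain_range_succ]
    intro m hm
    exact Or.inl ⟨by rw [hn]; omega, rfl⟩

lemma chain_expw (f : π → List γ) (M : Set (List π)) :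
    ∀ w : List π, (∀ x ∈ w, 1 ≤ (f x).length) →
    w.Chain' (fun x z => z ∈ LFollow M x) → (expw f w).Chain' (Rexp f M) := by
  intro w
  induction w with
  | nil => intro _ _; exact List.isChain_nil
  | cons x w' ih =>
    intro hpos hch
    rw [expw_cons, List.Chain', List.isChain_append]
    refine ⟨chain'_blkE f M x, ih (fun z hz => hpos z (by simp [hz])) (List.IsChain.tail hch), ?_⟩
    intro a ha z hz
    rw [getLast?_blkE f x (hpos x (by simp))] at ha
    have ha' : (x, (f x).length - 1) = a := by simpa using ha
    subst ha'
    cases w' with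
    | nil => rw [expw_nil] at hz; simp at hz
    | cons z₀ w'' =>
      rw [expw_cons, blkE_cons f z₀ (hpos z₀ (by simp))] at hz
      have hz' : (z₀, 0) = z := by simpa using hz
      subst hz'
      refine Or.inr ⟨show (f x).length = (f x).length - 1 + 1 from
        (by have := hpos x (by simp); omega), rfl, ?_⟩
      exact (List.isChain_cons_cons.1 hch).1

lemma chain_follow_self (M : Set (List π)) : ∀ w ∈ M,
    w.Chain' (fun x z => z ∈ LFollow M x) := by
  intro w hw
  apply chain'_of_adj
  intro u v a bb h
  exact ⟨u, v, h ▸ hw⟩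

lemma follow_expand_sub (f : π → List γ) (M : Set (List π))
    (hpos : ∀ w ∈ M, ∀ x ∈ w, 1 ≤ (f x).length) :
    ∀ a z, z ∈ LFollow (expSet f M) a → Rexp f M a z := by
  rintro a z ⟨u, v, w, hw, hexp⟩
  exact chain'_extract (chain_expw f M w (hpos w hw) (chain_follow_self M w hw)) hexp

lemma first_expand_sub (f : π → List γ) (M : Set (List π))
    (hpos : ∀ w ∈ M, ∀ x ∈ w, 1 ≤ (f x).length) :
    ∀ a, a ∈ LFirst (expSet f M) → a.2 = 0 ∧ a.1 ∈ LFirst M := by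
  rintro a ⟨w', w, hw, hexp⟩
  cases w with
  | nil => exact absurd hexp (by simp [expw_nil])
  | cons x w₀ =>
    rw [expw_cons, blkE_cons f x (hpos _ hw x (by simp)), List.cons_append] at hexp
    have h1 : (x, 0) = a := by
      have := congrArg List.head? hexp
      simpa using this
    subst h1
    exact ⟨rfl, ⟨w₀, hw⟩⟩

variable [Inhabited γ]

lemma evalFrom_nonempty {β σ : Type*} (A : NFA β σ) {S : Set σ} {w : List β}
    (h : (A.evalFrom S w).Nonempty) : S.Nonempty := by
  by_contra hS
  rw [Set.not_nonempty_iff_eq_empty] at hS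
  subst hS
  rw [evalFrom_empty'] at h
  exact Set.not_nonempty_empty h

lemma stepSet_singleton {β σ : Type*} (A : NFA β σ) (s : σ) (b : β) :
    A.stepSet {s} b = A.step s b := by
  ext q
  rw [NFA.mem_stepSet]
  constructor
  · rintro ⟨t, ht, hq⟩
    rw [Set.mem_singleton_iff] at ht
    subst ht
    exact hq
  · intro hq
    exact ⟨s, rfl, hq⟩

lemma forced (f : π → List γ) (M : Set (List π))
    (hpos : ∀ w ∈ M, ∀ x ∈ w, 1 ≤ (f x).length) :
    ∀ (w : List γ) (y : π) (i : ℕ),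
      ((glushkov (expSet f M) (fexp f)).evalFrom {some (y, i)} w).Nonempty →
      ∀ j, j < w.length → i + 1 + j < (f y).length → w[j]? = (f y)[i + 1 + j]? := by
  set A := glushkov (expSet f M) (fexp f) with hA
  intro w
  induction w with
  | nil => intro y i h j hj _; simp at hj
  | cons b' w' ih =>
    intro y i h j hj hjlen
    have hi1 : i + 1 < (f y).length := by omega
    rw [evalFrom_cons, stepSet_singleton] at h
    have hstep : ∀ q ∈ A.step (some (y, i)) b', q = some (y, i + 1) ∧
        (f y)[i + 1]? = some b' := by
      rintro q ⟨z, hz, hfz, rfl⟩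
      have hr := follow_expand_sub f M hpos _ _ hz
      rcases hr with ⟨-, rfl⟩ | ⟨heq, -, -⟩
      · constructor
        · rfl
        · rw [List.getElem?_eq_getElem hi1, ← hfz]
          simp [fexp, List.getD_eq_getElem?_getD, List.getElem?_eq_getElem hi1]
      · exact absurd heq (by
          have h2 : (f y).length = i + 1 → False := by omega
          exact h2)
    have hne : (A.step (some (y, i)) b').Nonempty := evalFrom_nonempty A h
    obtain ⟨q₀, hq₀⟩ := hne
    have hb' : (f y)[i + 1]? = some b' := (hstep q₀ hq₀).2
    have hsub : A.step (some (y, i)) b' ⊆ {some (y, i + 1)} := by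
      intro q hq
      rw [Set.mem_singleton_iff]
      exact (hstep q hq).1
    have h2 : (A.evalFrom {some (y, i + 1)} w').Nonempty :=
      h.mono (evalFrom_mono A hsub w')
    cases j with
    | zero =>
      rw [List.getElem?_cons_zero]
      exact hb'.symm
    | succ j' =>
      rw [List.getElem?_cons_succ]
      have := ih y (i + 1) h2 j' (by simpa using Nat.lt_of_succ_lt_succ (by simpa using hj))
        (by omega)
      rwa [show i + 1 + 1 + j' = i + 1 + (j' + 1) by omega] at this

lemma kill_branch (f : π → List γ) (M : Set (List π)) (k : ℕ)
    (hpos : ∀ w ∈ M, ∀ x ∈ w, 1 ≤ (f x).length)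
    (z₁ z₂ : π)
    (h12 : ¬ f z₁ <+: f z₂) (h21 : ¬ f z₂ <+: f z₁)
    (hl1 : 1 ≤ (f z₁).length ∧ (f z₁).length ≤ k)
    (hl2 : 1 ≤ (f z₂).length ∧ (f z₂).length ≤ k)
    (b : γ) (hb1 : fexp f (z₁, 0) = b) (hb2 : fexp f (z₂, 0) = b)
    (w : List γ) (hw : w.length = k - 1) :
    (glushkov (expSet f M) (fexp f)).evalFrom {some (z₁, 0)} w = ∅ ∨
    (glushkov (expSet f M) (fexp f)).evalFrom {some (z₂, 0)} w = ∅ := by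
  by_contra hcon
  push_neg at hcon
  obtain ⟨hc1, hc2⟩ := hcon
  obtain ⟨j, hj1, hj2, hjne, hjall⟩ := exists_mismatch (f z₁) (f z₂) h12 h21
  have he1 : (f z₁)[0]? = some b := by
    rw [List.getElem?_eq_getElem (by omega), ← hb1]
    simp [fexp, List.getD_eq_getElem?_getD, List.getElem?_eq_getElem (show 0 < (f z₁).length by omega)]
  have he2 : (f z₂)[0]? = some b := by
    rw [List.getElem?_eq_getElem (by omega), ← hb2]
    simp [fexp, List.getD_eq_getElem?_getD, List.getElem?_eq_getElem (show 0 < (f z₂).length by omega)]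
  have hj0 : j ≠ 0 := by
    intro h0
    subst h0
    rw [he1, he2] at hjne
    exact hjne rfl
  have hf1 := forced f M hpos w z₁ 0 hc1 (j - 1) (by omega) (by omega)
  have hf2 := forced f M hpos w z₂ 0 hc2 (j - 1) (by omega) (by omega)
  rw [show 0 + 1 + (j - 1) = j by omega] at hf1 hf2
  exact hjne (hf1 ▸ hf2 ▸ rfl)

lemma kLA_expand (f : π → List γ) (M : Set (List π)) (k : ℕ)
    (hblen : ∀ q b, ((glushkov M f).step q b).Nonempty → 1 ≤ b.length ∧ b.length ≤ k)
    (hbpre : ∀ p b₁ b₂ q₁ q₂, q₁ ∈ (glushkov M f).step p b₁ → q₂ ∈ (glushkov M f).step p b₂ →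
      (b₁, q₁) ≠ (b₂, q₂) → ¬ b₁ <+: b₂) :
    kLA (glushkov (expSet f M) (fexp f)) k := by
  have hpos : ∀ w ∈ M, ∀ x ∈ w, 1 ≤ (f x).length := by
    intro w hw x hx
    rcases mem_first_or_follow hw x hx with h | ⟨z, h⟩
    · exact (hblen none (f x) ⟨some x, (mem_glushkov_step_none M f _ _).2 ⟨x, h, rfl, rfl⟩⟩).1
    · exact (hblen (some z) (f x)
        ⟨some x, (mem_glushkov_step_some M f z _ _).2 ⟨x, h, rfl, rfl⟩⟩).1
  refine ⟨⟨none, rfl⟩, ?_⟩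
  intro p b q₁ q₂ h₁ h₂ hne w hw
  have hkill : ∀ z₁ z₂ : π, z₁ ∈ LFirst M ∧ z₂ ∈ LFirst M ∨
      (∃ x, z₁ ∈ LFollow M x ∧ z₂ ∈ LFollow M x) → z₁ ≠ z₂ →
      fexp f (z₁, 0) = b → fexp f (z₂, 0) = b →
      (glushkov (expSet f M) (fexp f)).evalFrom {some (z₁, 0)} w = ∅ ∨
      (glushkov (expSet f M) (fexp f)).evalFrom {some (z₂, 0)} w = ∅ := by
    intro z₁ z₂ hmem hzne hb1 hb2
    have hpair : ((f z₁ : List γ), (some z₁ : Option π)) ≠ (f z₂, some z₂) := by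
      intro h
      exact hzne (Option.some_injective _ (congrArg Prod.snd h))
    have hpair' : ((f z₂ : List γ), (some z₂ : Option π)) ≠ (f z₁, some z₁) :=
      fun h => hpair h.symm
    have hstuff : (¬ f z₁ <+: f z₂) ∧ (¬ f z₂ <+: f z₁) ∧
        (1 ≤ (f z₁).length ∧ (f z₁).length ≤ k) ∧
        (1 ≤ (f z₂).length ∧ (f z₂).length ≤ k) := by
      rcases hmem with ⟨hm1, hm2⟩ | ⟨x, hm1, hm2⟩
      · exact ⟨hbpre none (f z₁) (f z₂) (some z₁) (some z₂)
            ((mem_glushkov_step_none M f _ _).2 ⟨z₁, hm1, rfl, rfl⟩)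
            ((mem_glushkov_step_none M f _ _).2 ⟨z₂, hm2, rfl, rfl⟩) hpair,
          hbpre none (f z₂) (f z₁) (some z₂) (some z₁)
            ((mem_glushkov_step_none M f _ _).2 ⟨z₂, hm2, rfl, rfl⟩)
            ((mem_glushkov_step_none M f _ _).2 ⟨z₁, hm1, rfl, rfl⟩) hpair',
          hblen none (f z₁) ⟨some z₁, (mem_glushkov_step_none M f _ _).2 ⟨z₁, hm1, rfl, rfl⟩⟩,
          hblen none (f z₂) ⟨some z₂, (mem_glushkov_step_none M f _ _).2 ⟨z₂, hm2, rfl, rfl⟩⟩⟩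
      · exact ⟨hbpre (some x) (f z₁) (f z₂) (some z₁) (some z₂)
            ((mem_glushkov_step_some M f x _ _).2 ⟨z₁, hm1, rfl, rfl⟩)
            ((mem_glushkov_step_some M f x _ _).2 ⟨z₂, hm2, rfl, rfl⟩) hpair,
          hbpre (some x) (f z₂) (f z₁) (some z₂) (some z₁)
            ((mem_glushkov_step_some M f x _ _).2 ⟨z₂, hm2, rfl, rfl⟩)
            ((mem_glushkov_step_some M f x _ _).2 ⟨z₁, hm1, rfl, rfl⟩) hpair',
          hblen (some x) (f z₁)
            ⟨some z₁, (mem_glushkov_step_some M f x _ _).2 ⟨z₁, hm1, rfl, rfl⟩⟩,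
          hblen (some x) (f z₂)
            ⟨some z₂, (mem_glushkov_step_some M f x _ _).2 ⟨z₂, hm2, rfl, rfl⟩⟩⟩
    exact kill_branch f M k hpos z₁ z₂ hstuff.1 hstuff.2.1 hstuff.2.2.1 hstuff.2.2.2
      b hb1 hb2 w hw
  cases p with
  | none =>
    obtain ⟨y₁', hy₁, hf₁, rfl⟩ := h₁
    obtain ⟨y₂', hy₂, hf₂, rfl⟩ := h₂
    obtain ⟨y₁, i₁⟩ := y₁'
    obtain ⟨y₂, i₂⟩ := y₂'
    obtain ⟨hi₁, hz₁⟩ := first_expand_sub f M hpos _ hy₁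
    obtain ⟨hi₂, hz₂⟩ := first_expand_sub f M hpos _ hy₂
    have hi₁' : i₁ = 0 := hi₁
    have hi₂' : i₂ = 0 := hi₂
    subst hi₁'
    subst hi₂'
    have hzne : y₁ ≠ y₂ := by
      intro h
      exact hne (by rw [h])
    exact hkill y₁ y₂ (Or.inl ⟨hz₁, hz₂⟩) hzne hf₁ hf₂
  | some a =>
    obtain ⟨x, i⟩ := a
    obtain ⟨y₁', hy₁, hf₁, rfl⟩ := h₁
    obtain ⟨y₂', hy₂, hf₂, rfl⟩ := h₂
    have hr₁ := follow_expand_sub f M hpos _ _ hy₁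
    have hr₂ := follow_expand_sub f M hpos _ _ hy₂
    rcases hr₁ with ⟨hlt₁, rfl⟩ | ⟨heq₁, hy₁0, hy₁f⟩
    · rcases hr₂ with ⟨-, rfl⟩ | ⟨heq₂, -, -⟩
      · exact absurd rfl hne
      · omega
    · rcases hr₂ with ⟨hlt₂, rfl⟩ | ⟨heq₂, hy₂0, hy₂f⟩
      · omega
      · obtain ⟨z₁, i₁⟩ := y₁'
        obtain ⟨z₂, i₂⟩ := y₂'
        have hy₁0' : i₁ = 0 := hy₁0
        have hy₂0' : i₂ = 0 := hy₂0
        subst hy₁0'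
        subst hy₂0'
        have hzne : z₁ ≠ z₂ := by
          intro h
          exact hne (by rw [h])
        exact hkill z₁ z₂ (Or.inr ⟨x, hy₁f, hy₂f⟩) hzne hf₁ hf₂

lemma map_fexp_blkE (f : π → List γ) (x : π) : (blkE f x).map (fexp f) = f x := by
  apply List.ext_getElem
  · simp [blkE]
  · intro i h1 h2
    simp only [blkE, List.getElem_map, List.getElem_range]
    simp [fexp, List.getD_eq_getElem?_getD, List.getElem?_eq_getElem h2]

lemma map_fexp_expw (f : π → List γ) (w : List π) :
    (expw f w).map (fexp f) = (w.map f).flatten := by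
  rw [expw, List.map_flatMap, List.flatMap_def]
  congr 1
  apply List.map_congr_left
  intro x _
  exact map_fexp_blkE f x

theorem block_to_lookahead (γ : Type) (L : Set (List γ)) (k : ℕ) :
    IsKBlockDet L k → IsKLookaheadDet L k := by
  rintro ⟨π, E, f, hnd, ⟨-, hblen, hbpre⟩, hL⟩
  by_cases hγ : Nonempty γ
  · letI : Inhabited γ := ⟨Classical.arbitrary γ⟩
    refine ⟨π × ℕ, expandE f E, fexp f, ?_, ?_, ?_⟩
    · rw [show rchars (expandE f E) = (rchars E).flatMap (blkE f) from rchars_expandE f E]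
      exact nodup_flatMap_blkE f _ hnd
    · rw [show ((expandE f E).matches' : Set (List (π × ℕ))) = expSet f E.matches' from
        matches'_expandE f E]
      exact kLA_expand f E.matches' k hblen hbpre
    · rw [hL]
      ext w
      constructor
      · rintro ⟨ws, hws, rfl⟩
        refine ⟨expw f ws, ?_, map_fexp_expw f ws⟩
        rw [show ((expandE f E).matches' : Set (List (π × ℕ))) = expSet f E.matches' from
          matches'_expandE f E]
        exact ⟨ws, hws, rfl⟩
      · rintro ⟨ws', hws', rfl⟩
        rw [show ((expandE f E).matches' : Set (List (π × ℕ))) = expSet f E.matches' from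
          matches'_expandE f E] at hws'
        obtain ⟨ws, hws, rfl⟩ := hws'
        exact ⟨ws, hws, (map_fexp_expw f ws).symm⟩
  · have hempty : ∀ w : List γ, w = [] := by
      intro w
      cases w with
      | nil => rfl
      | cons a _ => exact absurd ⟨a⟩ hγ
    have hLfirst : LFirst ((RegularExpression.epsilon : RegularExpression Empty).matches'
        : Set (List Empty)) = ∅ := by
      ext y
      simp only [Set.mem_empty_iff_false, iff_false]
      rintro ⟨w', hw'⟩
      have : y :: w' = [] := hw'
      simp at this
    by_cases hnil : [] ∈ L
    · refine ⟨Empty, RegularExpression.epsilon, fun e => e.elim, by simp [rchars], ?_, ?_⟩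
      · refine ⟨⟨none, rfl⟩, ?_⟩
        intro p b q₁ q₂ h₁ h₂ hne w hw
        exfalso
        cases p with
        | none =>
          obtain ⟨y, hy, -, -⟩ := h₁
          rw [hLfirst] at hy
          exact hy
        | some x => exact x.elim
      · ext w
        constructor
        · intro hwL
          have : w = [] := hempty w
          subst this
          exact ⟨[], rfl, rfl⟩
        · rintro ⟨ws, hws, rfl⟩
          have : ws = [] := hws
          subst this
          exact hnil
    · refine ⟨Empty, RegularExpression.zero, fun e => e.elim, by simp [rchars], ?_, ?_⟩
      · refine ⟨⟨none, rfl⟩, ?_⟩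
        intro p b q₁ q₂ h₁ h₂ hne w hw
        exfalso
        cases p with
        | none =>
          obtain ⟨y, ⟨w', hw'⟩, -, -⟩ := h₁
          exact hw'.elim
        | some x => exact x.elim
      · ext w
        constructor
        · intro hwL
          exact absurd ((hempty w) ▸ hwL) hnil
        · rintro ⟨ws, hws, -⟩
          exact hws.elim

end Expand

/-- For every `k ≥ 1` there is a unary language that is `(k+1)`-lookahead deterministic
but not `m`-block deterministic for any `m`; moreover `k`-block deterministic languages
are always `k`-lookahead deterministic, and for every `k ≥ 2` the inclusion is strict. -/
theorem stmt11 :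
    (∀ k : ℕ, 1 ≤ k → ∃ L : Set (List Unit),
      IsKLookaheadDet L (k + 1) ∧ ∀ m : ℕ, ¬ IsKBlockDet L m) ∧
    (∀ (γ : Type) (L : Set (List γ)) (k : ℕ), IsKBlockDet L k → IsKLookaheadDet L k) ∧
    (∀ k : ℕ, 2 ≤ k → ∃ L : Set (List Unit),
      IsKLookaheadDet L k ∧ ¬ IsKBlockDet L k) := by
  refine ⟨?_, block_to_lookahead, ?_⟩
  · intro k hk
    exact ⟨Lk k, Lk_LA k hk, fun m => Lk_not_block k hk m⟩
  · intro k hk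
    refine ⟨Lk (k - 1), ?_, Lk_not_block (k - 1) (by omega) k⟩
    have := Lk_LA (k - 1) (by omega)
    rwa [show k - 1 + 1 = k by omega] at this

end BD
end

section
/- With E^♯ = χ(E_b^♯) as above, the block-expansion map φ (sending each marked block [w]_i to w[1]_{i,1}⋯w[|w|]_{i,|w|}, extended to a monoid morphism) is a bijection between L(E_b^♯) and L(E^♯). -/
namespace BD

/-- Expansion of a marked block into the word of its letter occurrences. -/
def expand {π γ : Type*} (f : π → List γ) (x : π) : List (γ × π × ℕ) :=
  (f x).zipIdx.map (fun p => (p.1, x, p.2))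

/-- The blockwise expansion morphism `φ`. -/
def phi {π γ : Type*} (f : π → List γ) (ws : List π) : List (γ × π × ℕ) :=
  (ws.map (expand f)).flatten

/-- The regular expression of a single word. -/
def word2re {α : Type*} (l : List α) : RegularExpression α :=
  l.foldr (fun a r => RegularExpression.char a * r) 1

/-- The expansion `χ` replacing each marked block by the concatenation of its
letter occurrences. -/
def chi {π γ : Type*} (f : π → List γ) : RegularExpression π → RegularExpression (γ × π × ℕ)
  | .zero => 0
  | .epsilon => 1
  | .char x => word2re (expand f x)
  | .plus p q => chi f p + chi f q
  | .comp p q => chi f p * chi f q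
  | .star p => .star (chi f p)

open Computability

variable {π γ : Type*} (f : π → List γ)

lemma phi_nil : phi f [] = [] := rfl
lemma phi_cons (x : π) (ws : List π) : phi f (x :: ws) = expand f x ++ phi f ws := by
  simp [phi]
lemma phi_append (u v : List π) : phi f (u ++ v) = phi f u ++ phi f v := by
  simp [phi]
lemma phi_flatten (L : List (List π)) : phi f L.flatten = (L.map (phi f)).flatten := by
  induction L with
  | nil => rfl
  | cons h t ih => simp [phi_append, ih]

lemma expand_ne_nil {x : π} (hx : f x ≠ []) : expand f x ≠ [] := by
  simp [expand, hx]

lemma expand_head {x : π} {a : γ} {t : List γ} (hx : f x = a :: t) :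
    (expand f x).head? = some (a, x, 0) := by
  simp [expand, hx, List.zipIdx_cons]

lemma phi_injective (hf : ∀ x : π, f x ≠ []) : Function.Injective (phi f) := by
  intro u
  induction u with
  | nil =>
    intro v h
    cases v with
    | nil => rfl
    | cons y vs =>
      exfalso
      rw [phi_nil, phi_cons] at h
      exact expand_ne_nil f (hf y) (List.append_eq_nil_iff.mp h.symm).1
  | cons x us ih =>
    intro v h
    cases v with
    | nil =>
      exfalso
      rw [phi_nil, phi_cons] at h
      exact expand_ne_nil f (hf x) (List.append_eq_nil_iff.mp h).1
    | cons y vs =>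
      rw [phi_cons, phi_cons] at h
      obtain ⟨a, t, hx⟩ := List.exists_cons_of_ne_nil (hf x)
      obtain ⟨b, s, hy⟩ := List.exists_cons_of_ne_nil (hf y)
      have hhead : ((expand f x ++ phi f us).head?) = ((expand f y ++ phi f vs).head?) := by
        rw [h]
      rw [List.head?_append_of_ne_nil _ (expand_ne_nil f (hf x)),
        List.head?_append_of_ne_nil _ (expand_ne_nil f (hf y)),
        expand_head f hx, expand_head f hy] at hhead
      have hxy : x = y := by
        injection hhead with h1
        exact congrArg (fun t => t.2.1) h1
      subst hxy
      have := List.append_cancel_left h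
      rw [ih this]

lemma word2re_matches {α : Type*} (l : List α) : (word2re l).matches' = {l} := by
  induction l with
  | nil =>
    rw [word2re, List.foldr_nil, RegularExpression.matches'_epsilon]
    rfl
  | cons a t ih =>
    have : word2re (a :: t) = RegularExpression.char a * word2re t := rfl
    rw [this, RegularExpression.matches'_mul, RegularExpression.matches'_char, ih]
    ext x
    rw [Language.mem_mul]
    constructor
    · rintro ⟨u, hu, v, hv, rfl⟩
      replace hu : u = [a] := hu
      replace hv : v = t := hv
      subst hu; subst hv; rfl
    · rintro hx
      replace hx : x = a :: t := hx
      subst hx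
      exact ⟨[a], rfl, t, rfl, rfl⟩

lemma exists_preimage_list_s13 {A : Set (List π)} :
    ∀ L : List (List (γ × π × ℕ)), (∀ y ∈ L, ∃ y' ∈ A, phi f y' = y) →
      ∃ M : List (List π), (∀ z ∈ M, z ∈ A) ∧ L = M.map (phi f) := by
  intro L
  induction L with
  | nil => exact fun _ => ⟨[], by simp, rfl⟩
  | cons h t ih =>
    intro hL
    obtain ⟨y', hy', hphi⟩ := hL h List.mem_cons_self
    obtain ⟨M, hM, rfl⟩ := ih (fun y hy => hL y (List.mem_cons_of_mem _ hy))
    refine ⟨y' :: M, ?_, by simp [hphi]⟩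
    intro z hz
    rcases List.mem_cons.mp hz with rfl | hz
    · exact hy'
    · exact hM z hz

lemma chi_matches (E : RegularExpression π) :
    ((chi f E).matches' : Set (List (γ × π × ℕ))) = phi f '' E.matches' := by
  induction E with
  | zero =>
    rw [chi, RegularExpression.matches'_zero]
    show (∅ : Set _) = phi f '' (∅ : Set _)
    simp
  | epsilon =>
    rw [chi, RegularExpression.matches'_epsilon]
    ext x
    constructor
    · rintro rfl; exact ⟨[], rfl, rfl⟩
    · rintro ⟨w, hw, rfl⟩
      have : w = [] := hw
      subst this; rfl
  | char x =>
    rw [chi, word2re_matches, RegularExpression.matches'_char]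
    ext u
    constructor
    · rintro rfl
      exact ⟨[x], rfl, by simp [phi]⟩
    · rintro ⟨w, hw, rfl⟩
      have : w = [x] := hw
      subst this
      exact Set.mem_singleton_iff.mpr (by simp [phi])
  | plus p q ihp ihq =>
    have h1 : (chi f (p.plus q)).matches' = (chi f p).matches' + (chi f q).matches' :=
      RegularExpression.matches'_add _ _
    have h2 : (p.plus q).matches' = p.matches' + q.matches' :=
      RegularExpression.matches'_add _ _
    rw [h1, h2]
    show ((chi f p).matches' ∪ (chi f q).matches' : Set _) =
      phi f '' (p.matches' ∪ q.matches' : Set _)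
    rw [ihp, ihq]
    exact (Set.image_union _ _ _).symm
  | comp p q ihp ihq =>
    have h1 : (chi f (p.comp q)).matches' = (chi f p).matches' * (chi f q).matches' :=
      RegularExpression.matches'_mul _ _
    have h2 : (p.comp q).matches' = p.matches' * q.matches' :=
      RegularExpression.matches'_mul _ _
    rw [h1, h2]
    ext u
    rw [Language.mem_mul]
    constructor
    · rintro ⟨a, ha, b, hb, rfl⟩
      rw [show ((chi f p).matches' : Set _) = _ from ihp] at ha
      rw [show ((chi f q).matches' : Set _) = _ from ihq] at hb
      obtain ⟨a', ha', rfl⟩ := ha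
      obtain ⟨b', hb', rfl⟩ := hb
      exact ⟨a' ++ b', Language.append_mem_mul ha' hb', phi_append f a' b'⟩
    · rintro ⟨w, hw, rfl⟩
      replace hw := Language.mem_mul.mp hw
      obtain ⟨a, ha, b, hb, rfl⟩ := hw
      exact ⟨phi f a, ihp ▸ ⟨a, ha, rfl⟩, phi f b, ihq ▸ ⟨b, hb, rfl⟩, (phi_append f a b).symm⟩
  | star p ihp =>
    have h1 : (chi f p.star).matches' = ((chi f p).matches')∗ :=
      RegularExpression.matches'_star _
    have h2 : (p.star).matches' = (p.matches')∗ :=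
      RegularExpression.matches'_star _
    rw [h1, h2]
    ext u
    rw [Language.mem_kstar]
    constructor
    · rintro ⟨L, rfl, hL⟩
      have hpre : ∀ y ∈ L, ∃ y' ∈ (p.matches' : Set _), phi f y' = y := by
        intro y hy
        have := hL y hy
        rw [show ((chi f p).matches' : Set _) = _ from ihp] at this
        exact this
      obtain ⟨M, hM, rfl⟩ := exists_preimage_list_s13 f L hpre
      exact ⟨M.flatten, Language.join_mem_kstar hM, phi_flatten f M⟩
    · rintro ⟨w, hw, rfl⟩
      replace hw := Language.mem_kstar.mp hw
      obtain ⟨L, rfl, hL⟩ := hw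
      refine ⟨L.map (phi f), phi_flatten f L, ?_⟩
      intro y hy
      obtain ⟨z, hz, rfl⟩ := List.mem_map.mp hy
      exact ihp ▸ ⟨z, hL z hz, rfl⟩


/-- `φ` is a bijection between `L(E_b♯)` and `L(E♯) = L(χ(E_b♯))`. -/
theorem stmt13 : ∀ (γ π : Type) (f : π → List γ) (E : RegularExpression π),
    (∀ x : π, f x ≠ []) →
    Set.BijOn (phi f) E.matches' (chi f E).matches' := by
  intro γ π f E hf
  rw [show ((chi f E).matches' : Set _) = phi f '' E.matches' from chi_matches f E]
  exact ((phi_injective f hf).injOn).bijOn_image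


end BD
end

section
/- In any Glushkov automaton, for every non-trivial orbit O, every in-gate o_in of O, and every out-gate o_out of O, there is a transition from o_out to o_in (on the letter labeling all transitions into o_in). -/
namespace BD

open Relation Computability

variable {π : Type}

/-- The follow relation of a language. -/
def Fol (L : Set (List π)) (x y : π) : Prop := y ∈ LFollow L x

lemma chain_right {K : Set (List π)} :
    ∀ (v u : List π) (z : π), u ++ z :: v ∈ K → ∃ l ∈ LLast K, ReflTransGen (Fol K) z l := by
  intro v
  induction v with
  | nil => intro u z h; exact ⟨z, ⟨u, h⟩, ReflTransGen.refl⟩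
  | cons y v ih =>
    intro u z h
    have e : Fol K z y := ⟨u, v, h⟩
    obtain ⟨l, hl, hr⟩ := ih (u ++ [z]) y (by simpa using h)
    exact ⟨l, hl, ReflTransGen.head e hr⟩

lemma chain_left_aux {K : Set (List π)} :
    ∀ (u pre : List π) (z : π) (v : List π), pre ++ (u ++ z :: v) ∈ K →
      ReflTransGen (Fol K) ((u ++ z :: v).head (by simp)) z := by
  intro u
  induction u with
  | nil => intro pre z v _h; simp only [List.nil_append, List.head_cons]; exact ReflTransGen.refl
  | cons a u ih =>
    intro pre z v h
    have hne : u ++ z :: v ≠ [] := by simp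
    have e : Fol K a ((u ++ z :: v).head hne) := by
      refine ⟨pre, (u ++ z :: v).tail, ?_⟩
      have : (u ++ z :: v).head hne :: (u ++ z :: v).tail = u ++ z :: v :=
        List.cons_head_tail hne
      rw [show pre ++ (a :: u ++ z :: v) = pre ++ a :: (u ++ z :: v) by simp] at h
      rwa [← this] at h
    have := ih (pre ++ [a]) z v (by simpa using h)
    exact ReflTransGen.head (by simpa using e) (by simpa using this)

lemma chain_left {K : Set (List π)} (u : List π) (z : π) (v : List π)
    (h : u ++ z :: v ∈ K) : ∃ f ∈ LFirst K, ReflTransGen (Fol K) f z := by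
  have hne : u ++ z :: v ≠ [] := by simp
  refine ⟨(u ++ z :: v).head hne, ⟨(u ++ z :: v).tail, ?_⟩, ?_⟩
  · rwa [List.cons_head_tail]
  · exact chain_left_aux u [] z v (by simpa using h)


/-! ### chars lemmas -/

lemma mem_rchars : ∀ (E : RegularExpression π), ∀ w ∈ E.matches', ∀ a ∈ w, a ∈ rchars E := by
  intro E
  induction E with
  | zero => intro w hw; exact absurd hw (Language.notMem_zero w)
  | epsilon => intro w hw a ha
               have : w = [] := hw
               subst this; simp at ha
  | char c =>
    intro w hw a ha
    have : w = [c] := hw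
    subst this; simpa [rchars] using ha
  | plus F G ihF ihG =>
    intro w hw a ha
    rcases (Language.mem_add F.matches' G.matches' w).mp hw with h | h
    · exact List.mem_append_left _ (ihF w h a ha)
    · exact List.mem_append_right _ (ihG w h a ha)
  | comp F G ihF ihG =>
    intro w hw a ha
    obtain ⟨u, hu, v, hv, rfl⟩ := (Language.mem_mul (l := F.matches') (m := G.matches')).mp hw
    rcases List.mem_append.mp ha with h | h
    · exact List.mem_append_left _ (ihF u hu a h)
    · exact List.mem_append_right _ (ihG v hv a h)
  | star F ih =>
    intro w hw a ha
    obtain ⟨S, rfl, hS⟩ := (Language.mem_kstar (l := F.matches')).mp hw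
    obtain ⟨l, hl, hal⟩ := List.mem_flatten.mp ha
    exact ih l (hS l hl) a hal

lemma LFirst_rchars {E : RegularExpression π} {x : π} (h : x ∈ LFirst E.matches') :
    x ∈ rchars E := by
  obtain ⟨w, hw⟩ := h; exact mem_rchars E _ hw x (by simp)

lemma LLast_rchars {E : RegularExpression π} {x : π} (h : x ∈ LLast E.matches') :
    x ∈ rchars E := by
  obtain ⟨w, hw⟩ := h; exact mem_rchars E _ hw x (by simp)

lemma Fol_rchars {E : RegularExpression π} {x y : π} (h : Fol E.matches' x y) :
    x ∈ rchars E ∧ y ∈ rchars E := by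
  obtain ⟨u, v, hw⟩ := h
  exact ⟨mem_rchars E _ hw x (by simp), mem_rchars E _ hw y (by simp)⟩

/-! ### decomposition lemmas -/

lemma LFirst_add {A B : Language π} {x : π} :
    x ∈ LFirst (A + B) ↔ x ∈ LFirst A ∨ x ∈ LFirst B := by
  constructor
  · rintro ⟨w, hw⟩; rcases (Language.mem_add _ _ _).mp hw with h | h
    · exact Or.inl ⟨w, h⟩
    · exact Or.inr ⟨w, h⟩
  · rintro (⟨w, h⟩ | ⟨w, h⟩) <;> exact ⟨w, (Language.mem_add _ _ _).mpr (by tauto)⟩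

lemma LLast_add {A B : Language π} {x : π} :
    x ∈ LLast (A + B) ↔ x ∈ LLast A ∨ x ∈ LLast B := by
  constructor
  · rintro ⟨w, hw⟩; rcases (Language.mem_add _ _ _).mp hw with h | h
    · exact Or.inl ⟨w, h⟩
    · exact Or.inr ⟨w, h⟩
  · rintro (⟨w, h⟩ | ⟨w, h⟩) <;> exact ⟨w, (Language.mem_add _ _ _).mpr (by tauto)⟩

lemma Fol_add {A B : Language π} {x y : π} :
    Fol (A + B) x y ↔ Fol A x y ∨ Fol B x y := by
  constructor
  · rintro ⟨u, v, hw⟩; rcases (Language.mem_add _ _ _).mp hw with h | h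
    · exact Or.inl ⟨u, v, h⟩
    · exact Or.inr ⟨u, v, h⟩
  · rintro (⟨u, v, h⟩ | ⟨u, v, h⟩) <;> exact ⟨u, v, (Language.mem_add _ _ _).mpr (by tauto)⟩

lemma LFirst_mul {A B : Language π} {x : π} (h : x ∈ LFirst (A * B)) :
    x ∈ LFirst A ∨ ([] ∈ A ∧ x ∈ LFirst B) := by
  obtain ⟨w, hw⟩ := h
  obtain ⟨a, ha, b, hb, hab⟩ := Language.mem_mul.mp hw
  cases a with
  | nil =>
    right
    have hb' : b = x :: w := by simpa using hab
    exact ⟨ha, ⟨w, by rw [← hb']; exact hb⟩⟩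
  | cons c a =>
    obtain ⟨rfl, rfl⟩ : c = x ∧ a ++ b = w := by simpa using hab
    exact Or.inl ⟨a, ha⟩

lemma LLast_mul {A B : Language π} {x : π} (h : x ∈ LLast (A * B)) :
    x ∈ LLast B ∨ ([] ∈ B ∧ x ∈ LLast A) := by
  obtain ⟨w, hw⟩ := h
  obtain ⟨a, ha, b, hb, hab⟩ := Language.mem_mul.mp hw
  rcases eq_or_ne b [] with rfl | hbne
  · right; exact ⟨hb, ⟨w, by rwa [show a = w ++ [x] by simpa using hab]  at ha⟩⟩
  · left
    have hlast : b.getLast hbne = x := by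
      have := congrArg List.getLast? hab
      rw [List.getLast?_append_of_ne_nil _ hbne, List.getLast?_concat,
        List.getLast?_eq_getLast_of_ne_nil hbne] at this
      exact Option.some.inj this
    refine ⟨b.dropLast, ?_⟩
    rw [show b.dropLast ++ [x] = b by rw [← hlast]; exact List.dropLast_append_getLast hbne]
    exact hb

lemma Fol_mul {A B : Language π} {x y : π} (h : Fol (A * B) x y) :
    Fol A x y ∨ Fol B x y ∨ (x ∈ LLast A ∧ y ∈ LFirst B) := by
  obtain ⟨u, v, hw⟩ := h
  obtain ⟨a, ha, b, hb, hab⟩ := Language.mem_mul.mp hw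
  rcases List.append_eq_append_iff.mp hab with ⟨t, hu, hb'⟩ | ⟨t, ha', ht⟩
  · right; left; exact ⟨t, v, by rw [← hb']; exact hb⟩
  · match t, ha', ht with
    | [], ha', ht =>
      have hb' : b = x :: y :: v := by simpa using ht.symm
      right; left; exact ⟨[], v, by rw [List.nil_append, ← hb']; exact hb⟩
    | [x'], ha', ht =>
      obtain ⟨rfl, hb2⟩ : x = x' ∧ y :: v = b := by simpa using ht
      right; right
      exact ⟨⟨u, by rw [← ha']; exact ha⟩, ⟨v, by rw [hb2]; exact hb⟩⟩
    | x' :: y' :: t, ha', ht =>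
      obtain ⟨rfl, rfl, hb2⟩ : x = x' ∧ y = y' ∧ v = t ++ b := by simpa using ht
      left; exact ⟨u, t, by rw [← ha']; exact ha⟩

lemma Fol_mul_left {A B : Language π} {x y : π} (hB : ∃ b, b ∈ B) (h : Fol A x y) :
    Fol (A * B) x y := by
  obtain ⟨u, v, hw⟩ := h; obtain ⟨b, hb⟩ := hB
  exact ⟨u, v ++ b, by have h := Language.append_mem_mul hw hb; simp only [List.append_assoc, List.cons_append] at h; exact h⟩

lemma Fol_mul_right {A B : Language π} {x y : π} (hA : ∃ a, a ∈ A) (h : Fol B x y) :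
    Fol (A * B) x y := by
  obtain ⟨u, v, hw⟩ := h; obtain ⟨a, ha⟩ := hA
  exact ⟨a ++ u, v, by have h := Language.append_mem_mul ha hw; rw [← List.append_assoc] at h; exact h⟩


/-! ### kstar lemmas -/

lemma flatten_first {K : Language π} :
    ∀ (S : List (List π)) (x : π) (t : List π), (∀ w ∈ S, w ∈ K) → S.flatten = x :: t →
      x ∈ LFirst K := by
  intro S
  induction S with
  | nil => intro x t _ h; simp at h
  | cons f S ih =>
    intro x t hS h
    cases f with
    | nil => exact ih x t (fun w hw => hS w (by simp [hw])) (by simpa using h)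
    | cons c f =>
      obtain ⟨rfl, -⟩ : c = x ∧ f ++ S.flatten = t := by simpa using h
      exact ⟨f, hS _ (by simp)⟩

lemma flatten_last {K : Language π} :
    ∀ (S : List (List π)) (x : π) (t : List π), (∀ w ∈ S, w ∈ K) → S.flatten = t ++ [x] →
      x ∈ LLast K := by
  intro S
  induction S using List.reverseRecOn with
  | nil => intro x t _ h; simp at h
  | append_singleton S f ih =>
    intro x t hS h
    have h2 : S.flatten ++ f = t ++ [x] := by simpa using h
    rcases eq_or_ne f [] with rfl | hfne
    · exact ih x t (fun w hw => hS w (by simp [hw])) (by simpa using h2)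
    · have hlast : f.getLast hfne = x := by
        have h3 := congrArg List.getLast? h2
        rw [List.getLast?_append_of_ne_nil _ hfne, List.getLast?_concat,
          List.getLast?_eq_getLast_of_ne_nil hfne] at h3
        exact Option.some.inj h3
      refine ⟨f.dropLast, ?_⟩
      rw [show f.dropLast ++ [x] = f by rw [← hlast]; exact List.dropLast_append_getLast hfne]
      exact hS f (by simp)

lemma Fol_kstar {K : Language π} {x y : π} (h : Fol ((K∗ : Language π)) x y) :
    Fol K x y ∨ (x ∈ LLast K ∧ y ∈ LFirst K) := by
  obtain ⟨u, v, hw⟩ := h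
  obtain ⟨S, hfl, hS⟩ := Language.mem_kstar.mp hw
  clear hw
  induction S generalizing u with
  | nil => simp at hfl
  | cons f S ih =>
    rw [List.flatten_cons] at hfl
    rcases List.append_eq_append_iff.mp hfl.symm with ⟨t, hu, hb'⟩ | ⟨t, ha', ht⟩
    · exact ih t hb'.symm (fun w hw => hS w (by simp [hw]))
    · match t, ha', ht with
      | [], ha', ht =>
        exact ih [] (by simpa using ht) (fun w hw => hS w (by simp [hw]))
      | [x'], ha', ht =>
        obtain ⟨rfl, hb2⟩ : x = x' ∧ y :: v = S.flatten := by simpa using ht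
        refine Or.inr ⟨⟨u, by rw [← ha']; exact hS f (by simp)⟩, ?_⟩
        exact flatten_first S y (S.flatten.tail)
          (fun w hw => hS w (by simp [hw])) (by rw [← hb2]; simp)
      | x' :: y' :: t, ha', ht =>
        obtain ⟨rfl, rfl, -⟩ : x = x' ∧ y = y' ∧ v = t ++ S.flatten := by simpa using ht
        exact Or.inl ⟨u, t, by rw [← ha']; exact hS f (by simp)⟩

lemma Fol_kstar_of {K : Language π} {x y : π} (h : Fol K x y) : Fol ((K∗ : Language π)) x y := by
  obtain ⟨u, v, hw⟩ := h
  exact ⟨u, v, Language.mem_kstar.mpr ⟨[u ++ x :: y :: v], by simp, by simp only [List.mem_singleton, forall_eq]; exact hw⟩⟩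

lemma cross_kstar {K : Language π} {x y : π} (hx : x ∈ LLast K) (hy : y ∈ LFirst K) :
    Fol ((K∗ : Language π)) x y := by
  obtain ⟨u, hu⟩ := hx
  obtain ⟨v, hv⟩ := hy
  refine ⟨u, v, ?_⟩
  have : (u ++ [x]) ++ (y :: v) ∈ (K∗ : Language π) := by
    refine Language.mem_kstar.mpr ⟨[u ++ [x], y :: v], by simp, ?_⟩
    intro w hw
    simp only [List.mem_cons, List.mem_singleton, List.not_mem_nil, or_false] at hw
    rcases hw with rfl | rfl
    · exact hu
    · exact hv
  simp only [List.append_assoc, List.cons_append, List.nil_append] at this; exact this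

lemma LFirst_kstar {K : Language π} {x : π} : x ∈ LFirst ((K∗ : Language π)) ↔ x ∈ LFirst K := by
  constructor
  · rintro ⟨w, hw⟩
    obtain ⟨S, hfl, hS⟩ := Language.mem_kstar.mp hw
    exact flatten_first S x w hS hfl.symm
  · rintro ⟨w, hw⟩
    exact ⟨w, Language.mem_kstar.mpr ⟨[x :: w], by simp, by simp only [List.mem_singleton, forall_eq]; exact hw⟩⟩

lemma LLast_kstar {K : Language π} {x : π} : x ∈ LLast ((K∗ : Language π)) ↔ x ∈ LLast K := by
  constructor
  · rintro ⟨w, hw⟩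
    obtain ⟨S, hfl, hS⟩ := Language.mem_kstar.mp hw
    exact flatten_last S x w hS hfl.symm
  · rintro ⟨w, hw⟩
    exact ⟨w, Language.mem_kstar.mpr ⟨[w ++ [x]], by simp, by simp only [List.mem_singleton, forall_eq]; exact hw⟩⟩

/-- Every edge of the follow graph of `(K∗ : Language π)` lies on a cycle. -/
lemma star_back {K : Language π} {a b : π} (h : Fol ((K∗ : Language π)) a b) :
    ReflTransGen (Fol ((K∗ : Language π))) b a := by
  have lift : ∀ {c d : π}, ReflTransGen (Fol K) c d → ReflTransGen (Fol ((K∗ : Language π))) c d :=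
    fun h => ReflTransGen.mono (fun _ _ => Fol_kstar_of) _ _ h
  have combine : ∀ {l f : π}, l ∈ LLast K → f ∈ LFirst K →
      ReflTransGen (Fol K) b l → ReflTransGen (Fol K) f a → ReflTransGen (Fol ((K∗ : Language π))) b a := by
    intro l f hl hf h1 h2
    exact ((lift h1).trans (ReflTransGen.single (cross_kstar hl hf))).trans (lift h2)
  rcases Fol_kstar h with hK | ⟨hl, hf⟩
  · obtain ⟨u, v, hw⟩ := hK
    obtain ⟨l, hlL, hbl⟩ := chain_right v (u ++ [a]) b (by simpa using hw)
    obtain ⟨f, hfF, hfa⟩ := chain_left u a (b :: v) hw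
    exact combine hlL hfF hbl hfa
  · obtain ⟨wb, hwb⟩ := hf
    obtain ⟨l, hlL, hbl⟩ := chain_right wb [] b (by simpa using hwb)
    obtain ⟨wa, hwa⟩ := hl
    obtain ⟨f, hfF, hfa⟩ := chain_left wa a [] hwa
    exact combine hlL hfF hbl hfa


/-! ### generic relation lemmas -/

lemma rtg_fwd {r r' : π → π → Prop} {S : Set π}
    (hcl : ∀ a b, r a b → a ∈ S → r' a b ∧ b ∈ S) {a b : π}
    (h : ReflTransGen r a b) (ha : a ∈ S) : ReflTransGen r' a b ∧ b ∈ S := by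
  induction h with
  | refl => exact ⟨ReflTransGen.refl, ha⟩
  | tail h e ih =>
    obtain ⟨h', hc⟩ := ih
    obtain ⟨e', hb⟩ := hcl _ _ e hc
    exact ⟨h'.tail e', hb⟩

lemma tg_fwd {r r' : π → π → Prop} {S : Set π}
    (hcl : ∀ a b, r a b → a ∈ S → r' a b ∧ b ∈ S) {a b : π}
    (h : TransGen r a b) (ha : a ∈ S) : TransGen r' a b ∧ b ∈ S := by
  induction h with
  | single e => obtain ⟨e', hb⟩ := hcl _ _ e ha; exact ⟨TransGen.single e', hb⟩
  | tail h e ih =>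
    obtain ⟨h', hc⟩ := ih
    obtain ⟨e', hb⟩ := hcl _ _ e hc
    exact ⟨h'.tail e', hb⟩

lemma rtg_bwd {r r' : π → π → Prop} {S : Set π}
    (hcl : ∀ a b, r a b → b ∈ S → r' a b ∧ a ∈ S) {a b : π}
    (h : ReflTransGen r a b) (hb : b ∈ S) : ReflTransGen r' a b ∧ a ∈ S := by
  induction h using ReflTransGen.head_induction_on with
  | refl => exact ⟨ReflTransGen.refl, hb⟩
  | head e h ih =>
    obtain ⟨h', hc⟩ := ih
    obtain ⟨e', ha⟩ := hcl _ _ e hc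
    exact ⟨h'.head e', ha⟩

lemma tg_bwd {r r' : π → π → Prop} {S : Set π}
    (hcl : ∀ a b, r a b → b ∈ S → r' a b ∧ a ∈ S) {a b : π}
    (h : TransGen r a b) (hb : b ∈ S) : TransGen r' a b ∧ a ∈ S := by
  induction h using TransGen.head_induction_on with
  | single e => obtain ⟨e', ha⟩ := hcl _ _ e hb; exact ⟨TransGen.single e', ha⟩
  | head e h ih =>
    obtain ⟨h', hc⟩ := ih
    obtain ⟨e', ha⟩ := hcl _ _ e hc
    exact ⟨TransGen.head e' h', ha⟩

lemma tg_first_edge {r : π → π → Prop} {a b : π} (h : TransGen r a b) : ∃ c, r a c := by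
  induction h with
  | single e => exact ⟨_, e⟩
  | tail _ _ ih => exact ih

/-- The strongly connected component at `q` of the follow graph. -/
def SCCAt (L : Set (List π)) (q : π) : Set π :=
  {p | ReflTransGen (Fol L) p q ∧ ReflTransGen (Fol L) q p}

lemma scc_transfer_fwd {L A : Set (List π)} {S : Set π}
    (hle : ∀ a b, Fol A a b → Fol L a b)
    (hfwd : ∀ a b, Fol L a b → a ∈ S → Fol A a b ∧ b ∈ S)
    {q : π} (hq : q ∈ S) (z : π) :
    (z ∈ SCCAt L q ↔ z ∈ SCCAt A q) ∧ (z ∈ SCCAt L q → z ∈ S) := by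
  constructor
  · constructor
    · rintro ⟨h1, h2⟩
      obtain ⟨h2', hz⟩ := rtg_fwd hfwd h2 hq
      exact ⟨(rtg_fwd hfwd h1 hz).1, h2'⟩
    · rintro ⟨h1, h2⟩
      exact ⟨ReflTransGen.mono hle _ _ h1, ReflTransGen.mono hle _ _ h2⟩
  · rintro ⟨h1, h2⟩
    exact (rtg_fwd hfwd h2 hq).2

lemma scc_transfer_bwd {L A : Set (List π)} {S : Set π}
    (hle : ∀ a b, Fol A a b → Fol L a b)
    (hbwd : ∀ a b, Fol L a b → b ∈ S → Fol A a b ∧ a ∈ S)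
    {q : π} (hq : q ∈ S) (z : π) :
    (z ∈ SCCAt L q ↔ z ∈ SCCAt A q) ∧ (z ∈ SCCAt L q → z ∈ S) := by
  constructor
  · constructor
    · rintro ⟨h1, h2⟩
      obtain ⟨h1', hz⟩ := rtg_bwd hbwd h1 hq
      exact ⟨h1', (rtg_bwd hbwd h2 hz).1⟩
    · rintro ⟨h1, h2⟩
      exact ⟨ReflTransGen.mono hle _ _ h1, ReflTransGen.mono hle _ _ h2⟩
  · rintro ⟨h1, h2⟩
    exact (rtg_bwd hbwd h1 hq).2

lemma matches'_plus' (F G : RegularExpression π) :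
    (F.plus G).matches' = F.matches' + G.matches' := rfl

lemma matches'_comp' (F G : RegularExpression π) :
    (F.comp G).matches' = F.matches' * G.matches' := rfl

lemma matches'_star'' (F : RegularExpression π) :
    (F.star).matches' = (F.matches'∗ : Language π) := rfl

/-! ### the core theorem -/

theorem core : ∀ (E : RegularExpression π), (rchars E).Nodup → ∀ (q x y : π),
    (∃ p ∈ SCCAt E.matches' q, TransGen (Fol E.matches') p p) →
    x ∈ SCCAt E.matches' q →
    (x ∈ LLast E.matches' ∨ ∃ z, z ∉ SCCAt E.matches' q ∧ Fol E.matches' x z) →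
    y ∈ SCCAt E.matches' q →
    (y ∈ LFirst E.matches' ∨ ∃ p, p ∉ SCCAt E.matches' q ∧ Fol E.matches' p y) →
    Fol E.matches' x y := by
  intro E
  induction E with
  | zero =>
    intro _ q x y hcyc _ _ _ _
    exfalso
    obtain ⟨p, _, hc⟩ := hcyc
    obtain ⟨c, ⟨u, v, hw⟩⟩ := tg_first_edge hc
    exact Language.notMem_zero _ hw
  | epsilon =>
    intro _ q x y hcyc _ _ _ _
    exfalso
    obtain ⟨p, _, hc⟩ := hcyc
    obtain ⟨c, ⟨u, v, hw⟩⟩ := tg_first_edge hc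
    have : u ++ p :: c :: v = [] := hw
    simp at this
  | char a =>
    intro _ q x y hcyc _ _ _ _
    exfalso
    obtain ⟨p, _, hc⟩ := hcyc
    obtain ⟨c, ⟨u, v, hw⟩⟩ := tg_first_edge hc
    have : u ++ p :: c :: v = [a] := hw
    have hl := congrArg List.length this
    simp at hl
    omega
  | star F _ =>
    intro _ q x y _ hx hxo hy hyi
    rw [matches'_star''] at *
    have hxL : x ∈ LLast F.matches' := by
      rcases hxo with h | ⟨z, hz, e⟩
      · exact LLast_kstar.mp h
      · exact absurd ⟨(star_back e).trans hx.1, hx.2.trans (ReflTransGen.single e)⟩ hz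
    have hyF : y ∈ LFirst F.matches' := by
      rcases hyi with h | ⟨p', hp', e⟩
      · exact LFirst_kstar.mp h
      · exact absurd ⟨(ReflTransGen.single e).trans hy.1, hy.2.trans (star_back e)⟩ hp'
    exact cross_kstar hxL hyF
  | plus F G ihF ihG =>
    intro hnd q x y hcyc hx hxo hy hyi
    rw [matches'_plus'] at *
    obtain ⟨hndF, hndG, hdisj⟩ := List.nodup_append.mp (show (rchars F ++ rchars G).Nodup from hnd)
    have hdisj : ∀ {a}, a ∈ rchars F → a ∈ rchars G → False := fun h1 h2 => hdisj _ h1 _ h2 rfl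
    have eclass : ∀ a b, Fol (F.matches' + G.matches') a b →
        (Fol F.matches' a b ∧ a ∈ rchars F ∧ b ∈ rchars F) ∨
        (Fol G.matches' a b ∧ a ∈ rchars G ∧ b ∈ rchars G) := by
      intro a b h
      rcases Fol_add.mp h with h | h
      · exact Or.inl ⟨h, (Fol_rchars h).1, (Fol_rchars h).2⟩
      · exact Or.inr ⟨h, (Fol_rchars h).1, (Fol_rchars h).2⟩
    obtain ⟨p, hpO, hcy⟩ := hcyc
    obtain ⟨c, e0⟩ := tg_first_edge hcy
    -- by symmetry handle the two sides
    rcases eclass p c e0 with ⟨-, hpS, -⟩ | ⟨-, hpS, -⟩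
    · -- the SCC lives in F
      set S : Set π := {a | a ∈ rchars F} with hSdef
      have hfwd : ∀ a b, Fol (F.matches' + G.matches') a b → a ∈ S → Fol F.matches' a b ∧ b ∈ S := by
        intro a b h ha
        rcases eclass a b h with ⟨h', _, hb⟩ | ⟨-, ha', -⟩
        · exact ⟨h', hb⟩
        · exact absurd (hdisj ha ha') id
      have hle : ∀ a b, Fol F.matches' a b → Fol (F.matches' + G.matches') a b :=
        fun a b h => Fol_add.mpr (Or.inl h)
      have hq : q ∈ S := (rtg_fwd hfwd hpO.1 hpS).2
      have tr := scc_transfer_fwd hle hfwd hq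
      have hxS : x ∈ S := (tr x).2 hx
      have hyS : y ∈ S := (tr y).2 hy
      refine hle x y (ihF hndF q x y ⟨p, (tr p).1.mp hpO, (tg_fwd hfwd hcy hpS).1⟩
        ((tr x).1.mp hx) ?_ ((tr y).1.mp hy) ?_)
      · rcases hxo with h | ⟨z, hz, e⟩
        · rcases LLast_add.mp h with h | h
          · exact Or.inl h
          · exact absurd (hdisj hxS (LLast_rchars (E := G) h)) id
        · obtain ⟨e', hzS⟩ := hfwd x z e hxS
          exact Or.inr ⟨z, fun hzA => hz ((tr z).1.mpr hzA), e'⟩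
      · rcases hyi with h | ⟨p', hp', e⟩
        · rcases LFirst_add.mp h with h | h
          · exact Or.inl h
          · exact absurd (hdisj hyS (LFirst_rchars (E := G) h)) id
        · rcases eclass p' y e with ⟨e', hp'S, -⟩ | ⟨-, -, hyG⟩
          · exact Or.inr ⟨p', fun hA => hp' ((tr p').1.mpr hA), e'⟩
          · exact absurd (hdisj hyS hyG) id
    · -- the SCC lives in G
      set S : Set π := {a | a ∈ rchars G} with hSdef
      have hfwd : ∀ a b, Fol (F.matches' + G.matches') a b → a ∈ S → Fol G.matches' a b ∧ b ∈ S := by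
        intro a b h ha
        rcases eclass a b h with ⟨-, ha', -⟩ | ⟨h', _, hb⟩
        · exact absurd (hdisj ha' ha) id
        · exact ⟨h', hb⟩
      have hle : ∀ a b, Fol G.matches' a b → Fol (F.matches' + G.matches') a b :=
        fun a b h => Fol_add.mpr (Or.inr h)
      have hq : q ∈ S := (rtg_fwd hfwd hpO.1 hpS).2
      have tr := scc_transfer_fwd hle hfwd hq
      have hxS : x ∈ S := (tr x).2 hx
      have hyS : y ∈ S := (tr y).2 hy
      refine hle x y (ihG hndG q x y ⟨p, (tr p).1.mp hpO, (tg_fwd hfwd hcy hpS).1⟩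
        ((tr x).1.mp hx) ?_ ((tr y).1.mp hy) ?_)
      · rcases hxo with h | ⟨z, hz, e⟩
        · rcases LLast_add.mp h with h | h
          · exact absurd (hdisj (LLast_rchars (E := F) h) hxS) id
          · exact Or.inl h
        · obtain ⟨e', hzS⟩ := hfwd x z e hxS
          exact Or.inr ⟨z, fun hzA => hz ((tr z).1.mpr hzA), e'⟩
      · rcases hyi with h | ⟨p', hp', e⟩
        · rcases LFirst_add.mp h with h | h
          · exact absurd (hdisj (LFirst_rchars (E := F) h) hyS) id
          · exact Or.inl h
        · rcases eclass p' y e with ⟨-, -, hyF⟩ | ⟨e', hp'S, -⟩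
          · exact absurd (hdisj hyF hyS) id
          · exact Or.inr ⟨p', fun hA => hp' ((tr p').1.mpr hA), e'⟩
  | comp F G ihF ihG =>
    intro hnd q x y hcyc hx hxo hy hyi
    rw [matches'_comp'] at *
    obtain ⟨hndF, hndG, hdisj⟩ := List.nodup_append.mp (show (rchars F ++ rchars G).Nodup from hnd)
    have hdisj : ∀ {a}, a ∈ rchars F → a ∈ rchars G → False := fun h1 h2 => hdisj _ h1 _ h2 rfl
    have eclass : ∀ a b, Fol (F.matches' * G.matches') a b →
        (Fol F.matches' a b ∧ a ∈ rchars F ∧ b ∈ rchars F) ∨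
        (Fol G.matches' a b ∧ a ∈ rchars G ∧ b ∈ rchars G) ∨
        (a ∈ LLast F.matches' ∧ b ∈ LFirst G.matches' ∧ a ∈ rchars F ∧ b ∈ rchars G) := by
      intro a b h
      rcases Fol_mul h with h | h | ⟨h1, h2⟩
      · exact Or.inl ⟨h, (Fol_rchars h).1, (Fol_rchars h).2⟩
      · exact Or.inr (Or.inl ⟨h, (Fol_rchars h).1, (Fol_rchars h).2⟩)
      · exact Or.inr (Or.inr ⟨h1, h2, LLast_rchars h1, LFirst_rchars h2⟩)
    obtain ⟨p, hpO, hcy⟩ := hcyc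
    obtain ⟨c, e0⟩ := tg_first_edge hcy
    have hne : (∃ a, a ∈ F.matches') ∧ (∃ b, b ∈ G.matches') := by
      obtain ⟨u, v, hw⟩ := e0
      obtain ⟨a, ha, b, hb, -⟩ := Language.mem_mul.mp hw
      exact ⟨⟨a, ha⟩, ⟨b, hb⟩⟩
    -- determine the side of the cycle: an edge into p and an edge out of p
    have hp2 : p ∈ rchars F ∨ p ∈ rchars G := by
      rcases eclass p c e0 with ⟨-, h, -⟩ | ⟨-, h, -⟩ | ⟨-, -, h, -⟩
      · exact Or.inl h
      · exact Or.inr h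
      · exact Or.inl h
    rcases hp2 with hpS | hpS
    · -- SCC lives in F: use backward closure
      set S : Set π := {a | a ∈ rchars F} with hSdef
      have hbwd : ∀ a b, Fol (F.matches' * G.matches') a b → b ∈ S →
          Fol F.matches' a b ∧ a ∈ S := by
        intro a b h hb
        rcases eclass a b h with ⟨h', ha, -⟩ | ⟨-, -, hb'⟩ | ⟨-, -, -, hb'⟩
        · exact ⟨h', ha⟩
        · exact absurd (hdisj hb hb') id
        · exact absurd (hdisj hb hb') id
      have hle : ∀ a b, Fol F.matches' a b → Fol (F.matches' * G.matches') a b :=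
        fun a b h => Fol_mul_left hne.2 h
      have hq : q ∈ S := (rtg_bwd hbwd hpO.2 hpS).2
      have tr := scc_transfer_bwd hle hbwd hq
      have hxS : x ∈ S := (tr x).2 hx
      have hyS : y ∈ S := (tr y).2 hy
      refine hle x y (ihF hndF q x y ⟨p, (tr p).1.mp hpO, (tg_bwd hbwd hcy hpS).1⟩
        ((tr x).1.mp hx) ?_ ((tr y).1.mp hy) ?_)
      · rcases hxo with h | ⟨z, hz, e⟩
        · rcases LLast_mul h with h | ⟨-, h⟩
          · exact absurd (hdisj hxS (LLast_rchars (E := G) h)) id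
          · exact Or.inl h
        · rcases eclass x z e with ⟨e', -, -⟩ | ⟨-, hx', -⟩ | ⟨hxl, -, -, -⟩
          · exact Or.inr ⟨z, fun hA => hz ((tr z).1.mpr hA), e'⟩
          · exact absurd (hdisj hxS hx') id
          · exact Or.inl hxl
      · rcases hyi with h | ⟨p', hp', e⟩
        · rcases LFirst_mul h with h | ⟨-, h⟩
          · exact Or.inl h
          · exact absurd (hdisj hyS (LFirst_rchars (E := G) h)) id
        · obtain ⟨e', hp'S⟩ := hbwd p' y e hyS
          exact Or.inr ⟨p', fun hA => hp' ((tr p').1.mpr hA), e'⟩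
    · -- SCC lives in G: use forward closure
      set S : Set π := {a | a ∈ rchars G} with hSdef
      have hfwd : ∀ a b, Fol (F.matches' * G.matches') a b → a ∈ S →
          Fol G.matches' a b ∧ b ∈ S := by
        intro a b h ha
        rcases eclass a b h with ⟨-, ha', -⟩ | ⟨h', -, hb⟩ | ⟨-, -, ha', -⟩
        · exact absurd (hdisj ha' ha) id
        · exact ⟨h', hb⟩
        · exact absurd (hdisj ha' ha) id
      have hle : ∀ a b, Fol G.matches' a b → Fol (F.matches' * G.matches') a b :=
        fun a b h => Fol_mul_right hne.1 h
      have hq : q ∈ S := (rtg_fwd hfwd hpO.1 hpS).2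
      have tr := scc_transfer_fwd hle hfwd hq
      have hxS : x ∈ S := (tr x).2 hx
      have hyS : y ∈ S := (tr y).2 hy
      refine hle x y (ihG hndG q x y ⟨p, (tr p).1.mp hpO, (tg_fwd hfwd hcy hpS).1⟩
        ((tr x).1.mp hx) ?_ ((tr y).1.mp hy) ?_)
      · rcases hxo with h | ⟨z, hz, e⟩
        · rcases LLast_mul h with h | ⟨-, h⟩
          · exact Or.inl h
          · exact absurd (hdisj (LLast_rchars (E := F) h) hxS) id
        · rcases eclass x z e with ⟨-, hx', -⟩ | ⟨e', -, -⟩ | ⟨hxl, -, -, -⟩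
          · exact absurd (hdisj hx' hxS) id
          · exact Or.inr ⟨z, fun hA => hz ((tr z).1.mpr hA), e'⟩
          · exact absurd (hdisj (LLast_rchars (E := F) hxl) hxS) id
      · rcases hyi with h | ⟨p', hp', e⟩
        · rcases LFirst_mul h with h | ⟨-, h⟩
          · exact absurd (hdisj (LFirst_rchars (E := F) h) hyS) id
          · exact Or.inl h
        · rcases eclass p' y e with ⟨-, -, hy'⟩ | ⟨e', -, -⟩ | ⟨-, hyf, -, -⟩
          · exact absurd (hdisj hy' hyS) id
          · exact Or.inr ⟨p', fun hA => hp' ((tr p').1.mpr hA), e'⟩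
          · exact Or.inl hyf



section Bridge

variable {β σ : Type*} (A : NFA β σ)

/-- The one-step relation of an NFA. -/
def StepRel (s t : σ) : Prop := ∃ b, t ∈ A.step s b

lemma evalFrom_rtg : ∀ (w : List β) (S : Set σ) (q : σ), q ∈ A.evalFrom S w →
    ∃ p ∈ S, ReflTransGen (StepRel A) p q := by
  intro w
  induction w with
  | nil => intro S q hq; exact ⟨q, hq, ReflTransGen.refl⟩
  | cons a w ih =>
    intro S q hq
    have hq' : q ∈ A.evalFrom (A.stepSet S a) w := hq
    obtain ⟨p', hp', h⟩ := ih _ q hq'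
    obtain ⟨p, hp, hstep⟩ := A.mem_stepSet.mp hp'
    exact ⟨p, hp, ReflTransGen.head ⟨a, hstep⟩ h⟩

lemma evalFrom_tg : ∀ (w : List β) (S : Set σ) (q : σ), q ∈ A.evalFrom S w → w ≠ [] →
    ∃ p ∈ S, TransGen (StepRel A) p q := by
  intro w
  induction w with
  | nil => intro S q _ h; exact absurd rfl h
  | cons a w ih =>
    intro S q hq _
    have hq' : q ∈ A.evalFrom (A.stepSet S a) w := hq
    cases w with
    | nil =>
      obtain ⟨p, hp, hstep⟩ := A.mem_stepSet.mp hq'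
      exact ⟨p, hp, TransGen.single ⟨a, hstep⟩⟩
    | cons c w' =>
      obtain ⟨p', hp', h⟩ := ih _ q hq' (by simp)
      obtain ⟨p, hp, hstep⟩ := A.mem_stepSet.mp hp'
      exact ⟨p, hp, TransGen.head ⟨a, hstep⟩ h⟩

lemma rtg_evalFrom {p q : σ} (h : ReflTransGen (StepRel A) p q) :
    ∃ w, q ∈ A.evalFrom {p} w := by
  induction h with
  | refl => exact ⟨[], rfl⟩
  | tail h e ih =>
    obtain ⟨w, hw⟩ := ih
    obtain ⟨b, hstep⟩ := e
    exact ⟨w ++ [b], by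
      rw [NFA.evalFrom_append]
      exact A.mem_stepSet.mpr ⟨_, hw, hstep⟩⟩

lemma reach_iff_rtg (p q : σ) : Reach A p q ↔ ReflTransGen (StepRel A) p q := by
  constructor
  · rintro ⟨w, hw⟩
    obtain ⟨p', hp', h⟩ := evalFrom_rtg A w {p} q hw
    rwa [Set.mem_singleton_iff.mp hp'] at h
  · intro h; exact rtg_evalFrom A h

end Bridge

section GBridge

variable {γ : Type} {L : Set (List π)} {f : π → γ}

local notation "R" => StepRel (glushkov L f)

lemma R_target {s t : Option π} (h : R s t) : ∃ y : π, t = some y := by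
  obtain ⟨b, ht⟩ := h
  cases s with
  | none => obtain ⟨y, -, -, h'⟩ := ht; exact ⟨y, h'⟩
  | some x => obtain ⟨y, -, -, h'⟩ := ht; exact ⟨y, h'⟩

lemma R_some_some {x y : π} : R (some x) (some y) ↔ Fol L x y := by
  constructor
  · rintro ⟨b, y', hy', -, heq⟩
    rwa [← Option.some.inj heq] at hy'
  · intro h; exact ⟨f y, y, h, rfl, rfl⟩

lemma rtg_to_none {s : Option π} (h : ReflTransGen R s none) : s = none := by
  induction h using ReflTransGen.head_induction_on with
  | refl => rfl
  | head e h' ih =>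
    subst ih
    obtain ⟨y, hy⟩ := R_target e
    exact nomatch hy

lemma rtg_some_some {x : π} : ∀ {t : Option π}, ReflTransGen R (some x) t →
    ∀ {y : π}, t = some y → ReflTransGen (Fol L) x y := by
  intro t h
  induction h with
  | refl =>
    rintro y heq
    obtain rfl := Option.some.inj heq
    exact ReflTransGen.refl
  | @tail b c h e ih =>
    rintro y rfl
    cases b with
    | none => exact absurd (rtg_to_none h) (by simp)
    | some z => exact (ih rfl).tail (R_some_some.mp e)

lemma tg_some_some {x : π} : ∀ {t : Option π}, TransGen R (some x) t →
    ∀ {y : π}, t = some y → TransGen (Fol L) x y := by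
  intro t h
  induction h with
  | @single c e =>
    rintro y rfl
    exact TransGen.single (R_some_some.mp e)
  | @tail b c h e ih =>
    rintro y rfl
    cases b with
    | none => exact absurd (rtg_to_none h.to_reflTransGen) (by simp)
    | some z => exact (ih rfl).tail (R_some_some.mp e)

lemma rtg_lift {x y : π} (h : ReflTransGen (Fol L) x y) :
    ReflTransGen R (some x) (some y) :=
  ReflTransGen.lift some (fun _ _ e => R_some_some.mpr e) _ _ h

end GBridge

/-- In the Glushkov automaton of a (marked) regular expression, for every non-trivial
orbit `O`, every in-gate `o_in` and every out-gate `o_out` of `O`, there is a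
transition from `o_out` to `o_in` on the letter labelling all transitions into `o_in`. -/
theorem stmt16 : ∀ (γ π : Type) (E : RegularExpression π) (f : π → γ),
    (rchars E).Nodup →
    ∀ O : Set (Option π), IsOrbit (glushkov E.matches' f) O →
      NonTrivial (glushkov E.matches' f) O →
      ∀ oin oout, InGate (glushkov E.matches' f) O oin →
        OutGate (glushkov E.matches' f) O oout →
        ∃ y : π, oin = some y ∧ oin ∈ (glushkov E.matches' f).step oout (f y) := by
  intro γ π E f hnd O hOrb hNT oin oout hIn hOut
  set L := E.matches' with hL
  set A := glushkov L f with hA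
  obtain ⟨q0, hO⟩ := hOrb
  have hmemO : ∀ s, s ∈ O ↔ (ReflTransGen (StepRel A) s q0 ∧ ReflTransGen (StepRel A) q0 s) := by
    intro s
    rw [hO]
    exact and_congr (reach_iff_rtg A s q0) (reach_iff_rtg A q0 s)
  obtain ⟨p, hpO, w, hwne, hw⟩ := hNT
  have hcycR : TransGen (StepRel A) p p := by
    obtain ⟨p', hp', h⟩ := evalFrom_tg A w {p} p hw hwne
    rwa [Set.mem_singleton_iff.mp hp'] at h
  obtain ⟨p0, rfl⟩ : ∃ z, p = some z := by
    cases hcycR with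
    | single e => exact R_target e
    | tail _ e => exact R_target e
  obtain ⟨q', rfl⟩ : ∃ z, q0 = some z := by
    have h2 := ((hmemO _).mp hpO).1
    cases q0 with
    | none => exact absurd (rtg_to_none h2) (by simp)
    | some z => exact ⟨z, rfl⟩
  have hnone : (none : Option π) ∉ O := by
    intro h
    have h2 := ((hmemO none).mp h).2
    exact nomatch (rtg_to_none h2)
  have hOsome : ∀ z : π, (some z ∈ O) ↔ z ∈ SCCAt L q' := by
    intro z
    rw [hmemO]
    constructor
    · rintro ⟨h1, h2⟩; exact ⟨rtg_some_some h1 rfl, rtg_some_some h2 rfl⟩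
    · rintro ⟨h1, h2⟩; exact ⟨rtg_lift h1, rtg_lift h2⟩
  have hp0 : p0 ∈ SCCAt L q' := (hOsome p0).mp hpO
  have hcyc : TransGen (Fol L) p0 p0 := tg_some_some hcycR rfl
  obtain ⟨y, rfl⟩ : ∃ y, oin = some y := by
    cases oin with
    | none => exact absurd hIn.1 hnone
    | some y => exact ⟨y, rfl⟩
  obtain ⟨x, rfl⟩ : ∃ x, oout = some x := by
    cases oout with
    | none => exact absurd hOut.1 hnone
    | some x => exact ⟨x, rfl⟩
  have hxO : x ∈ SCCAt L q' := (hOsome x).mp hOut.1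
  have hyO : y ∈ SCCAt L q' := (hOsome y).mp hIn.1
  have hxo : x ∈ LLast L ∨ ∃ z, z ∉ SCCAt L q' ∧ Fol L x z := by
    rcases hOut.2 with hacc | ⟨pp, hppO, b, hstep⟩
    · rcases hacc with ⟨y', hy', heq⟩ | ⟨heq, -⟩
      · obtain rfl := Option.some.inj heq
        exact Or.inl hy' 
      · exact nomatch heq
    · obtain ⟨z, hz, -, rfl⟩ := hstep
      exact Or.inr ⟨z, fun h => hppO ((hOsome z).mpr h), hz⟩
  have hyi : y ∈ LFirst L ∨ ∃ p, p ∉ SCCAt L q' ∧ Fol L p y := by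
    rcases hIn.2 with hstart | ⟨pp, hppO, b, hstep⟩
    · exact nomatch (show some y = none from hstart)
    · cases pp with
      | none =>
        obtain ⟨y', hy', -, heq⟩ := hstep
        rw [Option.some.inj heq]
        exact Or.inl hy'
      | some z =>
        obtain ⟨y', hy', -, heq⟩ := hstep
        obtain rfl := Option.some.inj heq
        exact Or.inr ⟨z, fun h => hppO ((hOsome z).mpr h), hy'⟩
  have key := core E hnd q' x y ⟨p0, hp0, hcyc⟩ hxO hxo hyO hyi
  exact ⟨y, rfl, ⟨y, key, rfl, rfl⟩⟩


end BD
end
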